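/- arXiv:1101.0416 — 8 statements merged into one kernel-verified Lean document; each statement's English description precedes it below -/
import Mathlib

section
/- Let M be a monoid, let e, f ∈ M be idempotents, and let m ∈ M satisfy m = f*m*e. Then: (i) there exists n ∈ M with n = e*n*f and n*m = e if and only if Mm = Me; (ii) there exists n ∈ M with n = e*n*f and m*n = f if and only if mM = fM; (iii) there exists n ∈ M with n = e*n*f, n*m = e and m*n = f if and only if both Mm = Me and mM = fM. (These characterize the split monomorphisms, split epimorphisms and isomorphisms m : e → f in the Karoubi envelope of M.) -/
/-- `Mx = {a*x | a ∈ M}` -/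
def leftIdeal {M : Type*} [Monoid M] (x : M) : Set M := {y | ∃ a, y = a * x}

/-- `xM = {x*a | a ∈ M}` -/
def rightIdeal {M : Type*} [Monoid M] (x : M) : Set M := {y | ∃ a, y = x * a}

/-- Characterization of split monomorphisms, split epimorphisms and isomorphisms
`m : e → f` in the Karoubi envelope of a monoid `M`. -/
theorem split_mono_epi_iso_in_karoubi {M : Type*} [Monoid M] (e f m : M)
    (he : e * e = e) (hf : f * f = f) (hm : m = f * m * e) :
    ((∃ n, n = e * n * f ∧ n * m = e) ↔ leftIdeal m = leftIdeal e) ∧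
    ((∃ n, n = e * n * f ∧ m * n = f) ↔ rightIdeal m = rightIdeal f) ∧
    ((∃ n, n = e * n * f ∧ n * m = e ∧ m * n = f) ↔
      (leftIdeal m = leftIdeal e ∧ rightIdeal m = rightIdeal f)) := by
  have hme : m * e = m := by conv_lhs => rw [hm, mul_assoc, mul_assoc, he, ← mul_assoc, ← hm]
  have hfm : f * m = m := by conv_lhs => rw [hm, ← mul_assoc, ← mul_assoc, hf, ← hm]
  have hnef : ∀ a : M, e * a * f = e * (e * a * f) * f := by
    intro a
    simp only [mul_assoc, hf]
    rw [← mul_assoc e e, he]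
  have mono : (∃ n, n = e * n * f ∧ n * m = e) ↔ leftIdeal m = leftIdeal e := by
    constructor
    · rintro ⟨n, hn, hnm⟩
      ext y
      constructor
      · rintro ⟨a, rfl⟩
        exact ⟨a * m, by rw [mul_assoc, hme]⟩
      · rintro ⟨a, rfl⟩
        exact ⟨a * n, by rw [mul_assoc, hnm]⟩
    · intro h
      have : e ∈ leftIdeal m := by rw [h]; exact ⟨1, (one_mul e).symm⟩
      obtain ⟨a, ha⟩ := this
      exact ⟨e * a * f, hnef a, by rw [mul_assoc, hfm, mul_assoc, ← ha, he]⟩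
  have epi : (∃ n, n = e * n * f ∧ m * n = f) ↔ rightIdeal m = rightIdeal f := by
    constructor
    · rintro ⟨n, hn, hmn⟩
      ext y
      constructor
      · rintro ⟨a, rfl⟩
        exact ⟨m * a, by rw [← mul_assoc, hfm]⟩
      · rintro ⟨a, rfl⟩
        exact ⟨n * a, by rw [← mul_assoc, hmn]⟩
    · intro h
      have : f ∈ rightIdeal m := by rw [h]; exact ⟨1, (mul_one f).symm⟩
      obtain ⟨a, ha⟩ := this
      exact ⟨e * a * f, hnef a, by rw [← mul_assoc, ← mul_assoc, hme, ← ha, hf]⟩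
  refine ⟨mono, epi, ?_⟩
  constructor
  · rintro ⟨n, hn, hnm, hmn⟩
    exact ⟨mono.mp ⟨n, hn, hnm⟩, epi.mp ⟨n, hn, hmn⟩⟩
  · rintro ⟨h1, h2⟩
    obtain ⟨n1, hn1, hn1m⟩ := mono.mpr h1
    obtain ⟨n2, hn2, hmn2⟩ := epi.mpr h2
    have hn1f : n1 * f = n1 := by
      conv_lhs => rw [hn1, mul_assoc, mul_assoc, hf, ← mul_assoc, ← hn1]
    refine ⟨n1, hn1, hn1m, ?_⟩
    calc m * n1 = m * (n1 * (m * n2)) := by rw [hmn2, hn1f]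
    _ = m * n1 * m * n2 := by rw [mul_assoc, mul_assoc]
    _ = f := by rw [mul_assoc m n1 m, hn1m, hme, hmn2]
end

section
/- Let M be a finite monoid and let e, f ∈ M be idempotents. The following are equivalent: (1) there is a bijection θ : Me → Mf with θ(a*x) = a*θ(x) for all a ∈ M and x ∈ Me (i.e. Me ≅ Mf as left M-sets); (2) there is a bijection η : eM → fM with η(x*a) = η(x)*a for all a ∈ M and x ∈ eM; (3) there exist a, b ∈ M with a*b = e and b*a = f; (4) there exist x, x' ∈ M with x = f*x*e, x' = e*x'*f, x'*x = e and x*x' = f; (5) MeM = MfM. -/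
/-- `MxM = {a*x*b | a,b ∈ M}` -/
def twoSidedIdeal {M : Type*} [Monoid M] (x : M) : Set M := {y | ∃ a b, y = a * x * b}

/-- In a finite monoid, some positive power of every element is idempotent. -/
lemma exists_idem_pow {M : Type*} [Monoid M] [Fintype M] (x : M) :
    ∃ n, 0 < n ∧ x ^ n * x ^ n = x ^ n := by
  obtain ⟨i, j, hij, hpow⟩ : ∃ i j : ℕ, i ≠ j ∧ x ^ i = x ^ j :=
    Finite.exists_ne_map_eq_of_infinite (fun n : ℕ => x ^ n)
  wlog hlt : i < j generalizing i j
  · exact this j i hij.symm hpow.symm (by omega)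
  set k := j - i with hk
  have hkpos : 0 < k := by omega
  have hstep : ∀ m, i ≤ m → x ^ m = x ^ (m + k) := by
    intro m hm
    obtain ⟨d, rfl⟩ := Nat.exists_eq_add_of_le hm
    have : x ^ (i + d) = x ^ i * x ^ d := pow_add x i d
    calc x ^ (i + d) = x ^ i * x ^ d := pow_add x i d
      _ = x ^ j * x ^ d := by rw [hpow]
      _ = x ^ (j + d) := (pow_add x j d).symm
      _ = x ^ (i + d + k) := by congr 1; omega
  have hmulti : ∀ t m, i ≤ m → x ^ m = x ^ (m + t * k) := by
    intro t
    induction t with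
    | zero => intro m hm; simp
    | succ t ih =>
      intro m hm
      calc x ^ m = x ^ (m + t * k) := ih m hm
        _ = x ^ (m + t * k + k) := hstep _ (by omega)
        _ = x ^ (m + (t + 1) * k) := by congr 1; ring
  refine ⟨(i + 1) * k, by positivity, ?_⟩
  rw [← pow_add]
  exact (hmulti (i + 1) ((i + 1) * k) (by nlinarith)).symm

/-- Iterating a sandwich identity. -/
lemma sandwich_pow {M : Type*} [Monoid M] {g s t : M} (h : g = s * g * t) :
    ∀ n, g = s ^ n * g * t ^ n := by
  intro n
  induction n with
  | zero => simp
  | succ n ih =>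
    calc g = s * g * t := h
      _ = s * (s ^ n * g * t ^ n) * t := by rw [← ih]
      _ = s ^ (n + 1) * g * t ^ (n + 1) := by
        rw [pow_succ' s, pow_succ t]
        simp [mul_assoc]

/-- Stability-type lemma: if `f` is idempotent, `g` is idempotent,
`f * g = g`, `g * f = g`, and `f ∈ M g M`, then `f = g`. -/
lemma idem_le_J_eq {M : Type*} [Monoid M] [Fintype M] {f g : M}
    (hg : g * g = g) (hfg : f * g = g) (hgf : g * f = g)
    (p q : M) (hpq : f = p * g * q) : f = g := by
  have hsand : f = (p * g) * f * q := by
    calc f = p * g * q := hpq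
      _ = p * (g * f) * q := by rw [hgf]
      _ = (p * g) * f * q := by simp [mul_assoc]
  obtain ⟨n, hn, hidem⟩ := exists_idem_pow (p * g)
  have hpow : f = (p * g) ^ n * f * q ^ n := sandwich_pow hsand n
  have key : (p * g) ^ n * f = f := by
    calc (p * g) ^ n * f = (p * g) ^ n * ((p * g) ^ n * f * q ^ n) := by rw [← hpow]
      _ = ((p * g) ^ n * (p * g) ^ n) * f * q ^ n := by simp [mul_assoc]
      _ = (p * g) ^ n * f * q ^ n := by rw [hidem]
      _ = f := hpow.symm
  obtain ⟨m, rfl⟩ : ∃ m, n = m + 1 := ⟨n - 1, by omega⟩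
  have hw : f = ((p * g) ^ m * p) * g := by
    calc f = (p * g) ^ (m + 1) * f := key.symm
      _ = (p * g) ^ m * (p * (g * f)) := by rw [pow_succ]; simp [mul_assoc]
      _ = (p * g) ^ m * (p * g) := by rw [hgf]
      _ = ((p * g) ^ m * p) * g := by simp [mul_assoc]
  have hfgf : f * g = f := by
    conv_lhs => rw [hw]
    calc ((p * g) ^ m * p) * g * g = ((p * g) ^ m * p) * (g * g) := by simp [mul_assoc]
      _ = ((p * g) ^ m * p) * g := by rw [hg]
      _ = f := hw.symm
  calc f = f * g := hfgf.symm
    _ = g := hfg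

/-- Equivalent characterizations of conjugacy of idempotents in a finite monoid. -/
theorem conjugacy_of_idempotents_tfae {M : Type*} [Monoid M] [Fintype M] (e f : M)
    (he : e * e = e) (hf : f * f = f) :
    List.TFAE [
      -- (1) `Me ≅ Mf` as left `M`-sets
      ∃ θ : leftIdeal e ≃ leftIdeal f,
        ∀ (a : M) (x : leftIdeal e) (h : a * (x : M) ∈ leftIdeal e),
          (θ ⟨a * (x : M), h⟩ : M) = a * (θ x : M),
      -- (2) `eM ≅ fM` as right `M`-sets
      ∃ η : rightIdeal e ≃ rightIdeal f,
        ∀ (a : M) (x : rightIdeal e) (h : (x : M) * a ∈ rightIdeal e),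
          (η ⟨(x : M) * a, h⟩ : M) = (η x : M) * a,
      -- (3)
      ∃ a b : M, a * b = e ∧ b * a = f,
      -- (4)
      ∃ x x' : M, x = f * x * e ∧ x' = e * x' * f ∧ x' * x = e ∧ x * x' = f,
      -- (5)
      twoSidedIdeal e = twoSidedIdeal f ] := by
  tfae_have 4 → 1 := by
    rintro ⟨x, x', hx, hx', hx'x, hxx'⟩
    have hxe : x * e = x := by conv_lhs => rw [hx, mul_assoc, he, ← hx]
    have hfx : f * x = x := by conv_lhs => rw [hx, ← mul_assoc, ← mul_assoc, hf]; rw [← hx]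
    have hex' : e * x' = x' := by
      conv_lhs => rw [hx', ← mul_assoc, ← mul_assoc, he]
      rw [← hx']
    have hx'f : x' * f = x' := by conv_lhs => rw [hx', mul_assoc, hf, ← hx']
    refine ⟨⟨fun m => ⟨m.1 * x', m.1 * x', by rw [mul_assoc, hx'f]⟩,
             fun n => ⟨n.1 * x, n.1 * x, by rw [mul_assoc, hxe]⟩,
             fun m => ?_, fun n => ?_⟩, fun a m h => mul_assoc a m.1 x'⟩
    · obtain ⟨a, ha⟩ := m.2
      apply Subtype.ext
      show m.1 * x' * x = m.1
      rw [mul_assoc, hx'x, ha, mul_assoc, he]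
    · obtain ⟨a, ha⟩ := n.2
      apply Subtype.ext
      show n.1 * x * x' = n.1
      rw [mul_assoc, hxx', ha, mul_assoc, hf]
  tfae_have 4 → 2 := by
    rintro ⟨x, x', hx, hx', hx'x, hxx'⟩
    have hxe : x * e = x := by conv_lhs => rw [hx, mul_assoc, he, ← hx]
    have hfx : f * x = x := by conv_lhs => rw [hx, ← mul_assoc, ← mul_assoc, hf]; rw [← hx]
    have hex' : e * x' = x' := by
      conv_lhs => rw [hx', ← mul_assoc, ← mul_assoc, he]
      rw [← hx']
    have hx'f : x' * f = x' := by conv_lhs => rw [hx', mul_assoc, hf, ← hx']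
    refine ⟨⟨fun m => ⟨x * m.1, x * m.1, by rw [← mul_assoc, hfx]⟩,
             fun n => ⟨x' * n.1, x' * n.1, by rw [← mul_assoc, hex']⟩,
             fun m => ?_, fun n => ?_⟩, fun a m h => (mul_assoc x m.1 a).symm⟩
    · obtain ⟨a, ha⟩ := m.2
      apply Subtype.ext
      show x' * (x * m.1) = m.1
      rw [← mul_assoc, hx'x, ha, ← mul_assoc, he]
    · obtain ⟨a, ha⟩ := n.2
      apply Subtype.ext
      show x * (x' * n.1) = n.1
      rw [← mul_assoc, hxx', ha, ← mul_assoc, hf]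
  tfae_have 1 → 3 := by
    rintro ⟨θ, hθ⟩
    have hEmem : e ∈ leftIdeal e := ⟨1, (one_mul e).symm⟩
    set E : leftIdeal e := ⟨e, hEmem⟩ with hE_def
    set u := (θ E : M) with hu_def
    have heu : e * u = u := by
      have h1 : e * (E : M) ∈ leftIdeal e := ⟨e, rfl⟩
      have h2 := hθ e E h1
      have hE2 : (⟨e * (E : M), h1⟩ : leftIdeal e) = E := Subtype.ext he
      rw [hE2] at h2
      exact h2.symm
    have hθval : ∀ m : leftIdeal e, (θ m : M) = (m : M) * u := by
      intro m
      obtain ⟨a, ha⟩ := m.2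
      have h1 : a * (E : M) ∈ leftIdeal e := ⟨a, rfl⟩
      have h2 := hθ a E h1
      have hm : (⟨a * (E : M), h1⟩ : leftIdeal e) = m := Subtype.ext ha.symm
      rw [hm] at h2
      rw [h2, ha, mul_assoc, heu]
    have hFmem : f ∈ leftIdeal f := ⟨1, (one_mul f).symm⟩
    set F : leftIdeal f := ⟨f, hFmem⟩ with hF_def
    set v := (θ.symm F : M) with hv_def
    have hvu : v * u = f := by
      have h2 := hθval (θ.symm F)
      rw [Equiv.apply_symm_apply] at h2
      exact h2.symm
    have huv : u * v = e := by
      obtain ⟨c, hc⟩ := (θ E).2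
      have h1 : u * ((θ.symm F : leftIdeal e) : M) ∈ leftIdeal e := by
        obtain ⟨b, hb⟩ := (θ.symm F).2
        exact ⟨u * b, by rw [hb, mul_assoc]⟩
      have h2 := hθ u (θ.symm F) h1
      rw [Equiv.apply_symm_apply] at h2
      have huf : u * (F : M) = u := by
        show u * f = u
        rw [hu_def, hc, mul_assoc, hf]
      rw [huf] at h2
      have h3 : (⟨u * ((θ.symm F : leftIdeal e) : M), h1⟩ : leftIdeal e) = E :=
        θ.injective (Subtype.ext h2)
      have := congrArg Subtype.val h3
      exact this
    exact ⟨u, v, huv, hvu⟩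
  tfae_have 2 → 3 := by
    rintro ⟨η, hη⟩
    have hEmem : e ∈ rightIdeal e := ⟨1, (mul_one e).symm⟩
    set E : rightIdeal e := ⟨e, hEmem⟩ with hE_def
    set u := (η E : M) with hu_def
    have hue : u * e = u := by
      have h1 : (E : M) * e ∈ rightIdeal e := ⟨e, rfl⟩
      have h2 := hη e E h1
      have hE2 : (⟨(E : M) * e, h1⟩ : rightIdeal e) = E := Subtype.ext he
      rw [hE2] at h2
      exact h2.symm
    have hηval : ∀ m : rightIdeal e, (η m : M) = u * (m : M) := by
      intro m
      obtain ⟨a, ha⟩ := m.2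
      have h1 : (E : M) * a ∈ rightIdeal e := ⟨a, rfl⟩
      have h2 := hη a E h1
      have hm : (⟨(E : M) * a, h1⟩ : rightIdeal e) = m := Subtype.ext ha.symm
      rw [hm] at h2
      rw [h2, ha, ← mul_assoc, hue]
    have hFmem : f ∈ rightIdeal f := ⟨1, (mul_one f).symm⟩
    set F : rightIdeal f := ⟨f, hFmem⟩ with hF_def
    set v := (η.symm F : M) with hv_def
    have huv : u * v = f := by
      have h2 := hηval (η.symm F)
      rw [Equiv.apply_symm_apply] at h2
      exact h2.symm
    have hvu : v * u = e := by
      obtain ⟨c, hc⟩ := (η E).2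
      have h1 : ((η.symm F : rightIdeal e) : M) * u ∈ rightIdeal e := by
        obtain ⟨b, hb⟩ := (η.symm F).2
        exact ⟨b * u, by rw [hb, mul_assoc]⟩
      have h2 := hη u (η.symm F) h1
      rw [Equiv.apply_symm_apply] at h2
      have hfu : (F : M) * u = u := by
        show f * u = u
        rw [hu_def, hc, ← mul_assoc, hf]
      rw [hfu] at h2
      have h3 : (⟨((η.symm F : rightIdeal e) : M) * u, h1⟩ : rightIdeal e) = E :=
        η.injective (Subtype.ext h2)
      exact congrArg Subtype.val h3
    exact ⟨v, u, hvu, huv⟩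
  tfae_have 3 → 4 := by
    rintro ⟨a, b, hab, hba⟩
    have hafb : a * f * b = e := by
      calc a * f * b = a * (b * a) * b := by rw [hba]
        _ = (a * b) * (a * b) := by simp [mul_assoc]
        _ = e * e := by rw [hab]
        _ = e := he
    have hbea : b * e * a = f := by
      calc b * e * a = b * (a * b) * a := by rw [hab]
        _ = (b * a) * (b * a) := by simp [mul_assoc]
        _ = f * f := by rw [hba]
        _ = f := hf
    have hff : ∀ z : M, f * (f * z) = f * z := fun z => by rw [← mul_assoc, hf]
    have hee : ∀ z : M, e * (e * z) = e * z := fun z => by rw [← mul_assoc, he]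
    refine ⟨f * b * e, e * a * f, ?_, ?_, ?_, ?_⟩
    · simp only [mul_assoc, he, hff]
    · simp only [mul_assoc, hf, hee]
    · calc (e * a * f) * (f * b * e) = e * (a * f * b) * e := by
            simp only [mul_assoc, hff]
        _ = e * e * e := by rw [hafb]
        _ = e := by rw [he, he]
    · calc (f * b * e) * (e * a * f) = f * (b * e * a) * f := by
            simp only [mul_assoc, hee]
        _ = f * f * f := by rw [hbea]
        _ = f := by rw [hf, hf]
  tfae_have 3 → 5 := by
    rintro ⟨a, b, hab, hba⟩
    have hafb : a * f * b = e := by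
      calc a * f * b = a * (b * a) * b := by rw [hba]
        _ = (a * b) * (a * b) := by simp [mul_assoc]
        _ = e * e := by rw [hab]
        _ = e := he
    have hbea : b * e * a = f := by
      calc b * e * a = b * (a * b) * a := by rw [hab]
        _ = (b * a) * (b * a) := by simp [mul_assoc]
        _ = f * f := by rw [hba]
        _ = f := hf
    ext y
    constructor
    · rintro ⟨p, q, rfl⟩
      exact ⟨p * a, b * q, by rw [← hafb]; simp [mul_assoc]⟩
    · rintro ⟨p, q, rfl⟩
      exact ⟨p * b, a * q, by rw [← hbea]; simp [mul_assoc]⟩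
  tfae_have 5 → 3 := by
    intro h5
    have hee' : e ∈ twoSidedIdeal f := by
      rw [← h5]; exact ⟨1, 1, by simp⟩
    obtain ⟨a, b, hab⟩ := hee'
    have hff' : f ∈ twoSidedIdeal e := by
      rw [h5]; exact ⟨1, 1, by simp⟩
    obtain ⟨c, d, hcd⟩ := hff'
    set u := e * a * f with hu_def
    set v := f * b * e with hv_def
    have huv : u * v = e := by
      have hffz : ∀ z : M, f * (f * z) = f * z := fun z => by rw [← mul_assoc, hf]
      calc u * v = e * (a * f * b) * e := by
            rw [hu_def, hv_def]; simp only [mul_assoc, hffz]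
        _ = e * e * e := by rw [← hab]
        _ = e := by rw [he, he]
    have heu : e * u = u := by rw [hu_def]; simp only [← mul_assoc, he]
    have hve : v * e = v := by rw [hv_def]; simp only [mul_assoc, he]
    have hfv : f * v = v := by rw [hv_def]; simp only [← mul_assoc, hf]
    have huf : u * f = u := by rw [hu_def]; simp only [mul_assoc, hf]
    set g := v * u with hg_def
    have hgg : g * g = g := by
      calc g * g = v * ((u * v) * u) := by rw [hg_def]; simp [mul_assoc]
        _ = v * (e * u) := by rw [huv]
        _ = v * u := by rw [heu]
        _ = g := hg_def.symm
    have hfg : f * g = g := by rw [hg_def, ← mul_assoc, hfv]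
    have hgf : g * f = g := by rw [hg_def, mul_assoc, huf]
    have hpgq : (c * u) * g * (v * d) = f := by
      calc (c * u) * g * (v * d) = c * ((u * v) * ((u * v) * d)) := by
            rw [hg_def]; simp [mul_assoc]
        _ = c * (e * (e * d)) := by rw [huv]
        _ = c * (e * d) := by rw [← mul_assoc e e d, he]
        _ = f := by rw [← mul_assoc]; exact hcd.symm
    have hfeq : f = g := idem_le_J_eq hgg hfg hgf (c * u) (v * d) hpgq.symm
    exact ⟨u, v, huv, by rw [← hg_def, ← hfeq]⟩
  tfae_finish
end

section
/- Let M be a finite monoid. Then: (i) the union of any family of prime ideals of M is a prime ideal; (ii) for every m ∈ M there is a largest prime ideal P(m) of M with m ∉ P(m), namely the union of all prime ideals not containing m; (iii) for all m, n ∈ M, P(m*n) is the largest prime ideal of M contained in P(m) ∩ P(n), i.e. P(m*n) = ⋃{Q | Q is a prime ideal of M and Q ⊆ P(m) ∩ P(n)}. Consequently m ↦ P(m) is a monoid homomorphism from M onto the set of prime ideals of M regarded as a monoid under the meet operation (Q, Q') ↦ (largest prime ideal contained in Q ∩ Q'). -/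
/-- An ideal of the monoid `M`: a (possibly empty) subset `I` with `M*I ∪ I*M ⊆ I`. -/
def IsMonoidIdeal {M : Type*} [Monoid M] (I : Set M) : Prop :=
  ∀ a x : M, x ∈ I → a * x ∈ I ∧ x * a ∈ I

/-- A prime ideal of the monoid `M`: an ideal whose complement is a submonoid. -/
def IsPrimeMonoidIdeal {M : Type*} [Monoid M] (I : Set M) : Prop :=
  IsMonoidIdeal I ∧ (1 : M) ∉ I ∧ ∀ x y : M, x ∉ I → y ∉ I → x * y ∉ I

/-- `P(m)`: the union of all prime ideals of `M` not containing `m`. -/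
def primeAvoiding {M : Type*} [Monoid M] (m : M) : Set M :=
  ⋃₀ {Q : Set M | IsPrimeMonoidIdeal Q ∧ m ∉ Q}

lemma sUnion_prime {M : Type*} [Monoid M] (S : Set (Set M))
    (hS : ∀ Q ∈ S, IsPrimeMonoidIdeal Q) : IsPrimeMonoidIdeal (⋃₀ S) := by
  refine ⟨fun a x hx => ?_, fun ⟨Q, hQ, h1⟩ => (hS Q hQ).2.1 h1, fun x y hx hy hxy => ?_⟩
  · obtain ⟨Q, hQ, hxQ⟩ := hx
    exact ⟨⟨Q, hQ, ((hS Q hQ).1 a x hxQ).1⟩, ⟨Q, hQ, ((hS Q hQ).1 a x hxQ).2⟩⟩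
  · obtain ⟨Q, hQ, hxyQ⟩ := hxy
    exact (hS Q hQ).2.2 x y (fun h => hx ⟨Q, hQ, h⟩) (fun h => hy ⟨Q, hQ, h⟩) hxyQ

lemma primeAvoiding_prime {M : Type*} [Monoid M] (m : M) :
    IsPrimeMonoidIdeal (primeAvoiding m) :=
  sUnion_prime _ (fun _ hQ => hQ.1)

lemma not_mem_primeAvoiding {M : Type*} [Monoid M] (m : M) : m ∉ primeAvoiding m := by
  rintro ⟨Q, ⟨_, hm⟩, hmQ⟩; exact hm hmQ

lemma le_primeAvoiding {M : Type*} [Monoid M] {m : M} {Q : Set M}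
    (hQ : IsPrimeMonoidIdeal Q) (hm : m ∉ Q) : Q ⊆ primeAvoiding m :=
  fun x hx => ⟨Q, ⟨hQ, hm⟩, hx⟩

/-- In a finite monoid: arbitrary unions of prime ideals are prime; every element `m` has a
largest prime ideal `P(m)` not containing it; and `m ↦ P(m)` is a homomorphism into the
prime ideals under the meet `(Q,Q') ↦` largest prime ideal contained in `Q ∩ Q'`. -/
theorem prime_ideals_and_support_map {M : Type*} [Monoid M] [Fintype M] :
    -- (i) a union of prime ideals is a prime ideal
    (∀ S : Set (Set M), (∀ Q ∈ S, IsPrimeMonoidIdeal Q) → IsPrimeMonoidIdeal (⋃₀ S)) ∧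
    -- (ii) `P(m)` is the largest prime ideal not containing `m`
    (∀ m : M, IsPrimeMonoidIdeal (primeAvoiding m) ∧ m ∉ primeAvoiding m ∧
      ∀ Q : Set M, IsPrimeMonoidIdeal Q → m ∉ Q → Q ⊆ primeAvoiding m) ∧
    -- (iii) `P(m*n)` is the largest prime ideal contained in `P(m) ∩ P(n)`,
    -- i.e. `m ↦ P(m)` is multiplicative for the meet operation
    (∀ m n : M, primeAvoiding (m * n) =
      ⋃₀ {Q : Set M | IsPrimeMonoidIdeal Q ∧ Q ⊆ primeAvoiding m ∩ primeAvoiding n}) ∧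
    -- `P(1)` is the largest prime ideal, i.e. the identity for the meet operation
    (∀ Q : Set M, IsPrimeMonoidIdeal Q → Q ⊆ primeAvoiding (1 : M)) := by
  refine ⟨sUnion_prime, fun m => ⟨primeAvoiding_prime m, not_mem_primeAvoiding m,
    fun Q hQ hm => le_primeAvoiding hQ hm⟩, fun m n => ?_,
    fun Q hQ => le_primeAvoiding hQ hQ.2.1⟩
  apply Set.Subset.antisymm
  · -- P(mn) ⊆ P(m) ∩ P(n), and P(mn) is prime, so it's in the RHS family
    have hm : m ∉ primeAvoiding (m * n) := by
      rintro ⟨Q, ⟨hQ, hmn⟩, hmQ⟩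
      exact hmn (hQ.1 n m hmQ).2
    have hn : n ∉ primeAvoiding (m * n) := by
      rintro ⟨Q, ⟨hQ, hmn⟩, hnQ⟩
      exact hmn (hQ.1 m n hnQ).1
    exact fun x hx => ⟨primeAvoiding (m * n),
      ⟨primeAvoiding_prime _, Set.subset_inter
        (le_primeAvoiding (primeAvoiding_prime _) hm)
        (le_primeAvoiding (primeAvoiding_prime _) hn)⟩, hx⟩
  · rintro x ⟨Q, ⟨hQ, hsub⟩, hxQ⟩
    have hm : m ∉ Q := fun h => not_mem_primeAvoiding m (hsub h).1
    have hn : n ∉ Q := fun h => not_mem_primeAvoiding n (hsub h).2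
    exact le_primeAvoiding hQ (hQ.2.2 m n hm hn) hxQ
end

section
/- Let M be a finite monoid. The map X ↦ nup(X) from the set of primary principal ideals of M (ordered by inclusion) to the set of prime ideals of M (ordered by inclusion) is an order isomorphism; explicitly: (i) for primary principal ideals X, Y of M one has X ⊆ Y if and only if nup(X) ⊆ nup(Y); (ii) every prime ideal P of M equals nup(X) for exactly one primary principal ideal X of M. -/
/-- `M_X = {m ∈ M | X ⊆ MmM}` -/
def MX {M : Type*} [Monoid M] (X : Set M) : Set M := {m | X ⊆ twoSidedIdeal m}

/-- `nup(X) = M \ M_X` -/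
def nup {M : Type*} [Monoid M] (X : Set M) : Set M := {m | ¬ X ⊆ twoSidedIdeal m}

/-- A primary (principal) ideal: a principal ideal `X = MxM` such that `M_X` is a submonoid
of `M` (equivalently `nup(X)` is a prime ideal). -/
def IsPrimary {M : Type*} [Monoid M] (X : Set M) : Prop :=
  (∃ x : M, X = twoSidedIdeal x) ∧ (1 : M) ∈ MX X ∧
    ∀ a b : M, a ∈ MX X → b ∈ MX X → a * b ∈ MX X

/-- The order-embedding property needs only that `Y` is principal. -/
lemma nup_subset_iff_aux {M : Type*} [Monoid M] (X Y : Set M)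
    (hY : ∃ y, Y = twoSidedIdeal y) : X ⊆ Y ↔ nup X ⊆ nup Y := by
  constructor
  · intro h m hm hYm
    exact hm (h.trans hYm)
  · intro h
    obtain ⟨y, rfl⟩ := hY
    by_contra hXY
    have hy : y ∈ nup X := fun hX => hXY hX
    exact (h hy) (fun z hz => hz)

/-- For a finite monoid, `X ↦ nup(X)` is an order isomorphism from the primary principal
ideals (ordered by inclusion) onto the prime ideals (ordered by inclusion). -/
theorem primary_ideals_order_iso_prime_ideals {M : Type*} [Monoid M] [Fintype M] :
    -- (i) order embedding
    (∀ X Y : Set M, IsPrimary X → IsPrimary Y → (X ⊆ Y ↔ nup X ⊆ nup Y)) ∧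
    -- (ii) every prime ideal is `nup(X)` for exactly one primary ideal `X`
    (∀ P : Set M, IsPrimeMonoidIdeal P → ∃! X : Set M, IsPrimary X ∧ nup X = P) := by
  classical
  refine ⟨fun X Y _ hY => nup_subset_iff_aux X Y hY.1, ?_⟩
  intro P hP
  obtain ⟨hPideal, h1, hprime⟩ := hP
  -- a list enumerating the complement of P
  obtain ⟨l, hmeml⟩ : ∃ l : List M, ∀ m : M, m ∈ l ↔ m ∉ P :=
    ⟨(Finset.univ.filter (fun m => m ∉ P)).toList, by intro m; simp⟩
  set x := l.prod with hx
  -- the product of elements outside P is outside P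
  have hxS : x ∉ P := by
    have key : ∀ l' : List M, (∀ m ∈ l', m ∉ P) → l'.prod ∉ P := by
      intro l'
      induction l' with
      | nil => intro _; simpa using h1
      | cons a t ih =>
        intro h
        rw [List.prod_cons]
        exact hprime a t.prod (h a (by simp))
          (ih fun m hm => h m (List.mem_cons_of_mem _ hm))
    exact key l (fun m hm => (hmeml m).1 hm)
  -- x lies in MsM for every s outside P
  have hxmem : ∀ s : M, s ∉ P → x ∈ twoSidedIdeal s := by
    intro s hs
    obtain ⟨l1, l2, heq⟩ := List.append_of_mem ((hmeml s).2 hs)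
    refine ⟨l1.prod, l2.prod, ?_⟩
    rw [hx, heq, List.prod_append, List.prod_cons, mul_assoc]
  set X := twoSidedIdeal x with hX
  have hMX : MX X = Pᶜ := by
    ext m
    constructor
    · intro hm hmP
      have hx_in : x ∈ X := ⟨1, 1, by simp⟩
      obtain ⟨a, b, hab⟩ := hm hx_in
      apply hxS
      rw [hab]
      exact (hPideal b (a * m) ((hPideal a m hmP).1)).2
    · intro hm z hz
      obtain ⟨a, b, hab⟩ := hz
      obtain ⟨u, v, huv⟩ := hxmem m hm
      exact ⟨a * u, v * b, by rw [hab, huv]; simp [mul_assoc]⟩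
  have hnup : nup X = P := by
    ext m
    simp only [nup, Set.mem_setOf_eq]
    constructor
    · intro h
      by_contra hm
      exact h (show m ∈ MX X from hMX ▸ (hm : m ∈ Pᶜ))
    · intro hm hsub
      have : m ∈ MX X := hsub
      rw [hMX] at this
      exact this hm
  refine ⟨X, ⟨⟨⟨x, rfl⟩, ?_, ?_⟩, hnup⟩, ?_⟩
  · show (1 : M) ∈ MX X
    rw [hMX]; exact h1
  · intro a b ha hb
    rw [hMX] at ha hb ⊢
    exact hprime a b ha hb
  · rintro Y ⟨hYprim, hYnup⟩
    have hs1 := (nup_subset_iff_aux Y X ⟨x, rfl⟩).2 (by rw [hYnup, hnup])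
    have hs2 := (nup_subset_iff_aux X Y hYprim.1).2 (by rw [hYnup, hnup])
    exact Set.Subset.antisymm hs1 hs2
end

section
/- Let M be a finite monoid, let x ∈ M and let X = MxM be the principal ideal it generates. Then X is primary if and only if there exists an idempotent e ∈ M with MeM = X such that for all idempotents e', f' ∈ M with Me'M = X and Mf'M = X one has M(e'*f')M = X. (That is, X is primary if and only if it is generated by a conjugacy class D of idempotents such that e, f ∈ D implies MefM = MeM.) -/
lemma mem_twoSidedIdeal_self {M : Type*} [Monoid M] (x : M) : x ∈ twoSidedIdeal x :=
  ⟨1, 1, by simp⟩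

lemma twoSidedIdeal_subset {M : Type*} [Monoid M] {x y : M} (h : y ∈ twoSidedIdeal x) :
    twoSidedIdeal y ⊆ twoSidedIdeal x := by
  obtain ⟨a, b, rfl⟩ := h
  rintro z ⟨u, v, rfl⟩
  exact ⟨u * a, b * v, by simp [mul_assoc]⟩

lemma mem_MX_iff {M : Type*} [Monoid M] {x m : M} :
    m ∈ MX (twoSidedIdeal x) ↔ x ∈ twoSidedIdeal m := by
  constructor
  · intro h; exact h (mem_twoSidedIdeal_self x)
  · intro h; exact twoSidedIdeal_subset h

lemma exists_idempotent_pow {M : Type*} [Monoid M] [Fintype M] (x : M) :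
    ∃ t : ℕ, 1 ≤ t ∧ x ^ t * x ^ t = x ^ t := by
  obtain ⟨m, n, hmn, h⟩ := Finite.exists_ne_map_eq_of_infinite (fun n : ℕ => x ^ n)
  wlog hlt : m < n generalizing m n
  · exact this n m hmn.symm h.symm (by omega)
  set k := n - m with hk
  have hk1 : 1 ≤ k := by omega
  have hmk : x ^ (m + k) = x ^ m := by
    rw [hk]; rw [show m + (n - m) = n by omega]; exact h.symm
  have step : ∀ s, x ^ (m + s + k) = x ^ (m + s) := by
    intro s
    calc x ^ (m + s + k) = x ^ (m + k) * x ^ s := by rw [← pow_add]; ring_nf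
    _ = x ^ m * x ^ s := by rw [hmk]
    _ = x ^ (m + s) := by rw [← pow_add]
  have key : ∀ j s, x ^ (m + s + j * k) = x ^ (m + s) := by
    intro j
    induction j with
    | zero => simp
    | succ j ih =>
      intro s
      have : m + s + (j + 1) * k = m + (s + j * k) + k := by ring
      rw [this, step (s + j * k), show m + (s + j * k) = m + s + j * k by ring, ih]
  have hle : m ≤ k * (m + 1) := by
    calc m ≤ 1 * (m + 1) := by omega
    _ ≤ k * (m + 1) := Nat.mul_le_mul_right _ hk1
  refine ⟨k * (m + 1), Nat.mul_pos hk1 m.succ_pos, ?_⟩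
  have ht : k * (m + 1) = m + (k * (m + 1) - m) := by omega
  rw [← pow_add]
  calc x ^ (k * (m + 1) + k * (m + 1))
      = x ^ (m + (k * (m + 1) - m) + (m + 1) * k) := by
        congr 1; rw [Nat.mul_comm (m + 1) k]; omega
    _ = x ^ (m + (k * (m + 1) - m)) := key (m + 1) _
    _ = x ^ (k * (m + 1)) := by rw [← ht]

/-- A principal ideal `X = MxM` of a finite monoid is primary (i.e. `M_X` is a submonoid)
if and only if `X` is generated by a conjugacy class `D` of idempotents such that
`e, f ∈ D` implies `MefM = MeM`. -/
theorem primary_iff_generated_by_idempotent_conjugacy_class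
    {M : Type*} [Monoid M] [Fintype M] (x : M) :
    ((1 : M) ∈ MX (twoSidedIdeal x) ∧
      ∀ a b : M, a ∈ MX (twoSidedIdeal x) → b ∈ MX (twoSidedIdeal x) →
        a * b ∈ MX (twoSidedIdeal x)) ↔
    (∃ e : M, e * e = e ∧ twoSidedIdeal e = twoSidedIdeal x ∧
      ∀ e' f' : M, e' * e' = e' → f' * f' = f' →
        twoSidedIdeal e' = twoSidedIdeal x → twoSidedIdeal f' = twoSidedIdeal x →
        twoSidedIdeal (e' * f') = twoSidedIdeal x) := by
  constructor
  · rintro ⟨-, hmul⟩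
    obtain ⟨t, ht1, hidem⟩ := exists_idempotent_pow x
    have hxMX : x ∈ MX (twoSidedIdeal x) := mem_MX_iff.mpr (mem_twoSidedIdeal_self x)
    have hpow : ∀ n, 1 ≤ n → x ^ n ∈ MX (twoSidedIdeal x) := by
      intro n hn
      induction n with
      | zero => omega
      | succ n ih =>
        rcases Nat.eq_or_lt_of_le hn with h | h
        · simpa [← h] using hxMX
        · have := hmul _ _ (ih (by omega)) hxMX
          simpa [pow_succ] using this
    refine ⟨x ^ t, hidem, ?_, ?_⟩
    · apply Set.Subset.antisymm
      · exact twoSidedIdeal_subset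
          ⟨x ^ (t - 1), 1, by rw [mul_one, ← pow_succ]; congr 1; omega⟩
      · exact twoSidedIdeal_subset (mem_MX_iff.mp (hpow t ht1))
    · intro e' f' he' hf' hei hfi
      apply Set.Subset.antisymm
      · -- e' * f' ∈ MxM since e' ∈ Me'M = MxM
        have he'x : e' ∈ twoSidedIdeal x := hei ▸ mem_twoSidedIdeal_self e'
        obtain ⟨a, b, hab⟩ := he'x
        exact twoSidedIdeal_subset ⟨a, b * f', by rw [hab]; simp [mul_assoc]⟩
      · have h1 : e' ∈ MX (twoSidedIdeal x) :=
          mem_MX_iff.mpr (hei ▸ mem_twoSidedIdeal_self x)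
        have h2 : f' ∈ MX (twoSidedIdeal x) :=
          mem_MX_iff.mpr (hfi ▸ mem_twoSidedIdeal_self x)
        exact twoSidedIdeal_subset (mem_MX_iff.mp (hmul _ _ h1 h2))
  · rintro ⟨e, hee, heI, hpair⟩
    refine ⟨fun y hy => ⟨y, 1, by simp⟩, ?_⟩
    intro a b ha hb
    rw [mem_MX_iff] at ha hb ⊢
    -- x ∈ MaM, x ∈ MbM; e ∈ MxM ⊆ MaM, MbM
    have hea : e ∈ twoSidedIdeal a :=
      twoSidedIdeal_subset ha (heI ▸ mem_twoSidedIdeal_self e)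
    have heb : e ∈ twoSidedIdeal b :=
      twoSidedIdeal_subset hb (heI ▸ mem_twoSidedIdeal_self e)
    obtain ⟨u, v, huv⟩ := hea   -- e = u * a * v
    obtain ⟨s, t, hst⟩ := heb   -- e = s * b * t
    set e₁ := v * e * u * a with he₁
    set e₂ := b * (t * e * s) with he₂
    have hrw : ∀ p q : M, p * e * q * (p * e * q) = p * (e * (q * p) * e) * q := by
      intro p q; simp [mul_assoc]
    have h1idem : e₁ * e₁ = e₁ := by
      have : e₁ * e₁ = v * (e * (u * a * v) * e) * (u * a) := by
        rw [he₁]; simp [mul_assoc]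
      rw [this, ← huv, hee, hee]
      rw [he₁]; simp [mul_assoc]
    have h2idem : e₂ * e₂ = e₂ := by
      have : e₂ * e₂ = (b * t) * (e * (s * b * t) * e) * s := by
        rw [he₂]; simp [mul_assoc]
      rw [this, ← hst, hee, hee]
      rw [he₂]; simp [mul_assoc]
    have h1I : twoSidedIdeal e₁ = twoSidedIdeal x := by
      rw [← heI]
      apply Set.Subset.antisymm
      · exact twoSidedIdeal_subset ⟨v, u * a, by rw [he₁]; simp [mul_assoc]⟩
      · -- e = (u*a) * e₁ * v
        refine twoSidedIdeal_subset ⟨u * a, v, ?_⟩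
        have : u * a * e₁ * v = (u * a * v) * e * (u * a * v) := by
          rw [he₁]; simp [mul_assoc]
        rw [this, ← huv, hee, hee]
    have h2I : twoSidedIdeal e₂ = twoSidedIdeal x := by
      rw [← heI]
      apply Set.Subset.antisymm
      · exact twoSidedIdeal_subset ⟨b * t, s, by rw [he₂]; simp [mul_assoc]⟩
      · -- e = s * e₂ * t
        refine twoSidedIdeal_subset ⟨s, b * t, ?_⟩
        have : s * e₂ * (b * t) = (s * b * t) * e * (s * b * t) := by
          rw [he₂]; simp [mul_assoc]
        rw [this, ← hst, hee, hee]
    have hprod := hpair e₁ e₂ h1idem h2idem h1I h2I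
    have hx12 : x ∈ twoSidedIdeal (e₁ * e₂) := hprod ▸ mem_twoSidedIdeal_self x
    -- e₁ * e₂ = (v*e*u) * (a*b) * (t*e*s) ∈ M(ab)M
    have : e₁ * e₂ ∈ twoSidedIdeal (a * b) :=
      ⟨v * e * u, t * e * s, by rw [he₁, he₂]; simp [mul_assoc]⟩
    exact twoSidedIdeal_subset this hx12
end

section
/- Let M be a finite monoid. The following are equivalent: (1) M is rectangular, i.e. for all idempotents e, f ∈ M with MeM = MfM, the product e*f is idempotent and M(e*f)M = MeM; (2) for all idempotents e, f ∈ M: MeM = MfM if and only if (e*f*e = e and f*e*f = f); (3) for all x, y ∈ M and all integers k, l ≥ 1 such that (x*y)^k and (y*x)^l are idempotent, one has (x*y)^k * (y*x)^l * (x*y)^k = (x*y)^k; (4) for all m, n ∈ M and all idempotents e, f ∈ M: if e ∈ MmM ∩ MnM ∩ MfM, then e*m*f*n*e = e*m*n*e; (5) for all m, n ∈ M and every idempotent e ∈ M: if MmM = MnM = MeM, then m*e*n = m*n. -/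
namespace RectangularAux

variable {M : Type*} [Monoid M]

/-- Conditions of the TFAE, abbreviated. -/
abbrev Cond1 (M : Type*) [Monoid M] : Prop :=
  ∀ e f : M, e * e = e → f * f = f → twoSidedIdeal e = twoSidedIdeal f →
    (e * f) * (e * f) = e * f ∧ twoSidedIdeal (e * f) = twoSidedIdeal e

abbrev Cond2 (M : Type*) [Monoid M] : Prop :=
  ∀ e f : M, e * e = e → f * f = f →
    (twoSidedIdeal e = twoSidedIdeal f ↔ (e * f * e = e ∧ f * e * f = f))

abbrev Cond3 (M : Type*) [Monoid M] : Prop :=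
  ∀ (x y : M) (k l : ℕ), 1 ≤ k → 1 ≤ l →
    (x * y) ^ k * (x * y) ^ k = (x * y) ^ k →
    (y * x) ^ l * (y * x) ^ l = (y * x) ^ l →
    (x * y) ^ k * (y * x) ^ l * (x * y) ^ k = (x * y) ^ k

abbrev Cond4 (M : Type*) [Monoid M] : Prop :=
  ∀ m n e f : M, e * e = e → f * f = f →
    e ∈ twoSidedIdeal m → e ∈ twoSidedIdeal n → e ∈ twoSidedIdeal f →
    e * m * f * n * e = e * m * n * e

abbrev Cond5 (M : Type*) [Monoid M] : Prop :=
  ∀ m n e : M, e * e = e →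
    twoSidedIdeal m = twoSidedIdeal e → twoSidedIdeal n = twoSidedIdeal e →
    m * e * n = m * n

lemma mem_self (x : M) : x ∈ twoSidedIdeal x := ⟨1, 1, by simp⟩

lemma J_subset {x y : M} (h : x ∈ twoSidedIdeal y) : twoSidedIdeal x ⊆ twoSidedIdeal y := by
  obtain ⟨a, b, rfl⟩ := h
  rintro z ⟨c, d, rfl⟩
  exact ⟨c * a, b * d, by simp [mul_assoc]⟩

lemma J_antisymm {x y : M} (hxy : x ∈ twoSidedIdeal y) (hyx : y ∈ twoSidedIdeal x) :
    twoSidedIdeal x = twoSidedIdeal y :=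
  subset_antisymm (J_subset hxy) (J_subset hyx)

lemma exists_idem_pow [Fintype M] (a : M) : ∃ N, 1 ≤ N ∧ a ^ N * a ^ N = a ^ N := by
  obtain ⟨i, j, hne, hija⟩ := Finite.exists_ne_map_eq_of_infinite (fun n : ℕ => a ^ n)
  have main : ∀ i j : ℕ, i < j → a ^ i = a ^ j → ∃ N, 1 ≤ N ∧ a ^ N * a ^ N = a ^ N := by
    intro i j hij hpow
    have hd1 : 1 ≤ j - i := by omega
    have hstep : ∀ m, i ≤ m → a ^ (m + (j - i)) = a ^ m := by
      intro m hm
      obtain ⟨t, rfl⟩ := Nat.exists_eq_add_of_le hm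
      calc a ^ (i + t + (j - i)) = a ^ (j + t) := by congr 1; omega
        _ = a ^ j * a ^ t := by rw [pow_add]
        _ = a ^ i * a ^ t := by rw [← hpow]
        _ = a ^ (i + t) := by rw [← pow_add]
    have hiter : ∀ k m, i ≤ m → a ^ (m + k * (j - i)) = a ^ m := by
      intro k
      induction k with
      | zero => intro m _; simp
      | succ k ih =>
        intro m hm
        have h1 : m + (k + 1) * (j - i) = (m + k * (j - i)) + (j - i) := by ring
        rw [h1, hstep _ (by omega), ih m hm]
    have hle : i ≤ (i + 1) * (j - i) := by
      have h2 : (i + 1) * 1 ≤ (i + 1) * (j - i) := Nat.mul_le_mul (le_refl _) hd1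
      omega
    refine ⟨(i + 1) * (j - i), ?_, ?_⟩
    · have h2 : 1 * 1 ≤ (i + 1) * (j - i) := Nat.mul_le_mul (by omega) hd1
      omega
    · rw [← pow_add]
      exact hiter (i + 1) _ hle
  rcases Nat.lt_or_ge i j with h | h
  · exact main i j h hija
  · have hji : j < i := by omega
    exact main j i hji hija.symm

lemma pump_iter {x a c : M} (h : x = a * x * c) : ∀ n : ℕ, x = a ^ n * x * c ^ n := by
  intro n
  induction n with
  | zero => simp
  | succ n ih =>
    calc x = a * x * c := h
      _ = a * (a ^ n * x * c ^ n) * c := by rw [← ih]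
      _ = a ^ (n + 1) * x * c ^ (n + 1) := by rw [pow_succ', pow_succ]; simp [mul_assoc]

lemma pump_right [Fintype M] {x a c : M} (h : x = a * x * c) :
    ∃ N, 1 ≤ N ∧ x = x * c ^ N := by
  obtain ⟨N, hN1, hNid⟩ := exists_idem_pow a
  have h1 : x = a ^ N * x * c ^ N := pump_iter h N
  have h2 : a ^ N * x = x := by
    calc a ^ N * x = a ^ N * (a ^ N * x * c ^ N) := by rw [← h1]
      _ = (a ^ N * a ^ N) * x * c ^ N := by simp [mul_assoc]
      _ = a ^ N * x * c ^ N := by rw [hNid]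
      _ = x := h1.symm
  refine ⟨N, hN1, ?_⟩
  calc x = a ^ N * x * c ^ N := h1
    _ = x * c ^ N := by rw [h2]

lemma pump_left [Fintype M] {x a c : M} (h : x = a * x * c) :
    ∃ N, 1 ≤ N ∧ x = a ^ N * x := by
  obtain ⟨N, hN1, hNid⟩ := exists_idem_pow c
  have h1 : x = a ^ N * x * c ^ N := pump_iter h N
  have h2 : x * c ^ N = x := by
    calc x * c ^ N = (a ^ N * x * c ^ N) * c ^ N := by rw [← h1]
      _ = a ^ N * x * (c ^ N * c ^ N) := by simp [mul_assoc]
      _ = a ^ N * x * c ^ N := by rw [hNid]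
      _ = x := h1.symm
  refine ⟨N, hN1, ?_⟩
  calc x = a ^ N * x * c ^ N := h1
    _ = a ^ N * (x * c ^ N) := by rw [mul_assoc]
    _ = a ^ N * x := by rw [h2]

lemma rstab [Fintype M] {x y : M} (h : x ∈ twoSidedIdeal (x * y)) :
    ∃ u, x = x * (y * u) := by
  obtain ⟨a, b, hab⟩ := h
  have h' : x = a * x * (y * b) := hab.trans (by simp [mul_assoc])
  obtain ⟨N, hN1, hN⟩ := pump_right h'
  obtain ⟨t, rfl⟩ : ∃ t, N = t + 1 := ⟨N - 1, by omega⟩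
  refine ⟨b * (y * b) ^ t, ?_⟩
  calc x = x * (y * b) ^ (t + 1) := hN
    _ = x * ((y * b) * (y * b) ^ t) := by rw [pow_succ']
    _ = x * (y * (b * (y * b) ^ t)) := by simp [mul_assoc]

lemma lstab [Fintype M] {x y : M} (h : x ∈ twoSidedIdeal (y * x)) :
    ∃ u, x = (u * y) * x := by
  obtain ⟨a, b, hab⟩ := h
  have h' : x = (a * y) * x * b := hab.trans (by simp [mul_assoc])
  obtain ⟨N, hN1, hN⟩ := pump_left h'
  obtain ⟨t, rfl⟩ : ∃ t, N = t + 1 := ⟨N - 1, by omega⟩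
  refine ⟨(a * y) ^ t * a, ?_⟩
  calc x = (a * y) ^ (t + 1) * x := hN
    _ = ((a * y) ^ t * (a * y)) * x := by rw [pow_succ]
    _ = ((a * y) ^ t * a) * y * x := by simp [mul_assoc]

/-! ### (2) → (1) -/

lemma imp21 (h2 : Cond2 M) : Cond1 M := by
  intro e f he hf hJ
  obtain ⟨hefe, hfef⟩ := (h2 e f he hf).mp hJ
  constructor
  · calc (e * f) * (e * f) = e * (f * e * f) := by simp [mul_assoc]
      _ = e * f := by rw [hfef]
  · refine J_antisymm ⟨1, f, by simp⟩ ⟨e, e, ?_⟩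
    simp only [← mul_assoc]
    rw [he]
    exact hefe.symm

/-! ### (1) → (2) -/

lemma lemmaB [Fintype M] {g e : M} (hg : g * g = g) (he : e * e = e)
    (hege : e * g * e = g) (hJ : twoSidedIdeal g = twoSidedIdeal e) : g = e := by
  have heg : e * g = g := by
    calc e * g = e * (e * g * e) := by rw [hege]
      _ = (e * e) * g * e := by simp [mul_assoc]
      _ = e * g * e := by rw [he]
      _ = g := hege
  have hge : g * e = g := by
    calc g * e = (e * g * e) * e := by rw [hege]
      _ = e * g * (e * e) := by simp [mul_assoc]
      _ = e * g * e := by rw [he]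
      _ = g := hege
  have hmem : e ∈ twoSidedIdeal (e * g) := by
    rw [heg, hJ]; exact mem_self e
  obtain ⟨u, hu⟩ := rstab hmem
  -- hu : e = e * (g * u)
  have h1 : g = g * (g * u) := by
    calc g = g * e := hge.symm
      _ = g * (e * (g * u)) := by rw [← hu]
      _ = (g * e) * (g * u) := by rw [← mul_assoc]
      _ = g * (g * u) := by rw [hge]
  have h2 : g = g * u := by
    calc g = g * (g * u) := h1
      _ = (g * g) * u := by rw [← mul_assoc]
      _ = g * u := by rw [hg]
  calc g = e * g := heg.symm
    _ = e * (g * u) := by rw [← h2]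
    _ = e := hu.symm

lemma imp12 [Fintype M] (h1 : Cond1 M) : Cond2 M := by
  intro e f he hf
  constructor
  · intro hJ
    obtain ⟨hef_idem, hef_J⟩ := h1 e f he hf hJ
    obtain ⟨hfe_idem, hfe_J⟩ := h1 f e hf he hJ.symm
    obtain ⟨hefe_idem, hefe_J⟩ := h1 (e * f) e hef_idem he hef_J
    obtain ⟨hfef_idem, hfef_J⟩ := h1 (f * e) f hfe_idem hf hfe_J
    constructor
    · refine lemmaB hefe_idem he ?_ (hefe_J.trans hef_J)
      -- e * (e*f*e) * e = e*f*e
      simp only [← mul_assoc]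
      rw [he, mul_assoc, he]
    · refine lemmaB hfef_idem hf ?_ (hfef_J.trans hfe_J)
      simp only [← mul_assoc]
      rw [hf, mul_assoc, hf]
  · rintro ⟨ha, hb⟩
    exact J_antisymm ⟨e, e, ha.symm⟩ ⟨f, f, hb.symm⟩

/-! ### (2) → (3) -/

lemma idem_pow_collapse {a : M} {k : ℕ} (hk : 1 ≤ k) (h : a ^ k * a ^ k = a ^ k) :
    ∀ m, 1 ≤ m → a ^ (k * m) = a ^ k := by
  intro m hm
  induction m with
  | zero => omega
  | succ m ih =>
    rcases Nat.eq_zero_or_pos m with rfl | hm'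
    · simp
    · rw [show k * (m + 1) = k * m + k from by ring, pow_add, ih hm', h]

lemma aux23 [Fintype M] {x y : M} {k l : ℕ} (hk : 1 ≤ k) (hl : 1 ≤ l)
    (hu : (x * y) ^ k * (x * y) ^ k = (x * y) ^ k)
    (hv : (y * x) ^ l * (y * x) ^ l = (y * x) ^ l) :
    (x * y) ^ k ∈ twoSidedIdeal ((y * x) ^ l) := by
  obtain ⟨t, ht⟩ : ∃ t, k * l = t + 1 := ⟨k * l - 1, by
    have h2 : 1 * 1 ≤ k * l := Nat.mul_le_mul hk hl
    omega⟩
  have h1 : (y * x) ^ l = (y * x) ^ (k * l) := by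
    rw [Nat.mul_comm k l]
    exact (idem_pow_collapse hl hv k hk).symm
  have hsc : SemiconjBy x (y * x) (x * y) := (mul_assoc x y x).symm
  have hsemi := (hsc.pow_right (k * l)).eq
  -- hsemi : x * (y*x)^(k*l) = (x*y)^(k*l) * x
  have key : ((x * y) ^ (k * l) * x) * (y * x) ^ l * (y * (x * y) ^ t) = (x * y) ^ k := by
    calc ((x * y) ^ (k * l) * x) * (y * x) ^ l * (y * (x * y) ^ t)
        = ((x * y) ^ (k * l) * x) * (y * x) ^ (k * l) * (y * (x * y) ^ t) := by rw [h1]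
      _ = (x * y) ^ (k * l) * (x * (y * x) ^ (k * l)) * (y * (x * y) ^ t) := by
          simp [mul_assoc]
      _ = (x * y) ^ (k * l) * ((x * y) ^ (k * l) * x) * (y * (x * y) ^ t) := by rw [hsemi]
      _ = ((x * y) ^ (k * l) * (x * y) ^ (k * l)) * ((x * y) * (x * y) ^ t) := by
          simp [mul_assoc]
      _ = ((x * y) ^ (k * l) * (x * y) ^ (k * l)) * (x * y) ^ (k * l) := by
          rw [← pow_succ', ← ht]
      _ = (x * y) ^ (k * l + k * l + k * l) := by rw [← pow_add, ← pow_add]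
      _ = (x * y) ^ (k * (3 * l)) := by congr 1; ring
      _ = (x * y) ^ k := idem_pow_collapse hk hu (3 * l) (by omega)
  exact ⟨(x * y) ^ (k * l) * x, y * (x * y) ^ t, key.symm⟩

lemma imp23 [Fintype M] (h2 : Cond2 M) : Cond3 M := by
  intro x y k l hk hl hu hv
  have hJ := J_antisymm (aux23 hk hl hu hv) (aux23 hl hk hv hu)
  exact ((h2 _ _ hu hv).mp hJ).1

/-! ### (3) → (2) -/

lemma aux32 [Fintype M] (h3 : Cond3 M) {e f : M} (he : e * e = e) (hf : f * f = f)
    (hJ : twoSidedIdeal e = twoSidedIdeal f) : e * f * e = e := by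
  have hfJ : f ∈ twoSidedIdeal e := by rw [hJ]; exact mem_self f
  obtain ⟨a, b0, hab⟩ := hfJ
  -- hab : f = a * e * b0
  have hb : f = a * e * (b0 * f) := by
    calc f = f * f := hf.symm
      _ = a * e * b0 * f := by rw [← hab]
      _ = a * e * (b0 * f) := by rw [mul_assoc]
  set b := b0 * f with hbdef
  set z := e * b with hzdef
  have haz : a * z = f := by
    rw [hzdef, ← mul_assoc]; exact hb.symm
  have hez : e * z = z := by rw [hzdef, ← mul_assoc, he]
  have hzJe : z ∈ twoSidedIdeal e := ⟨1, b, by rw [hzdef]; simp⟩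
  have hfz : f ∈ twoSidedIdeal z := ⟨a, 1, by rw [mul_one]; exact haz.symm⟩
  have hJez : twoSidedIdeal e = twoSidedIdeal z := by
    apply subset_antisymm
    · exact hJ.trans_subset (J_subset hfz)
    · exact J_subset hzJe
  have hmem1 : e ∈ twoSidedIdeal (e * b) := by
    rw [← hzdef, ← hJez]; exact mem_self e
  obtain ⟨u, hu⟩ := rstab hmem1
  -- hu : e = e * (b * u)
  have hzu : z * u = e := by
    rw [hzdef, mul_assoc]; exact hu.symm
  have hmem2 : z ∈ twoSidedIdeal (a * z) := by
    rw [haz, ← hJ, hJez]; exact mem_self z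
  obtain ⟨v, hv⟩ := lstab hmem2
  -- hv : z = (v * a) * z
  have hvf : z = v * f := by
    rw [← haz, ← mul_assoc]; exact hv
  have hzf : z * f = z := by
    calc z * f = v * f * f := by rw [← hvf]
      _ = v * (f * f) := by rw [mul_assoc]
      _ = v * f := by rw [hf]
      _ = z := hvf.symm
  set Y := f * (u * e) with hYdef
  have hXY : z * Y = e := by
    calc z * (f * (u * e)) = (z * f) * (u * e) := by rw [← mul_assoc]
      _ = z * (u * e) := by rw [hzf]
      _ = (z * u) * e := by rw [← mul_assoc]
      _ = e * e := by rw [hzu]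
      _ = e := he
  have hYX : Y * z = f := by
    calc (f * (u * e)) * z = f * (u * (e * z)) := by simp [mul_assoc]
      _ = f * (u * z) := by rw [hez]
      _ = (a * z) * (u * z) := by rw [haz]
      _ = a * ((z * u) * z) := by simp [mul_assoc]
      _ = a * (e * z) := by rw [hzu]
      _ = a * z := by rw [hez]
      _ = f := haz
  have hyp1 : (z * Y) ^ 1 * (z * Y) ^ 1 = (z * Y) ^ 1 := by
    rw [pow_one, hXY]; exact he
  have hyp2 : (Y * z) ^ 1 * (Y * z) ^ 1 = (Y * z) ^ 1 := by
    rw [pow_one, hYX]; exact hf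
  have hconc := h3 z Y 1 1 le_rfl le_rfl hyp1 hyp2
  rw [pow_one, pow_one, hXY, hYX] at hconc
  exact hconc

lemma imp32 [Fintype M] (h3 : Cond3 M) : Cond2 M := by
  intro e f he hf
  constructor
  · intro hJ
    exact ⟨aux32 h3 he hf hJ, aux32 h3 hf he hJ.symm⟩
  · rintro ⟨ha, hb⟩
    exact J_antisymm ⟨e, e, ha.symm⟩ ⟨f, f, hb.symm⟩

/-! ### (2) → (5) -/

lemma lemC [Fintype M] {m e : M} (he : e * e = e)
    (hme : twoSidedIdeal m = twoSidedIdeal e) :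
    ∃ g, g * g = g ∧ m * g = m ∧ twoSidedIdeal g = twoSidedIdeal e := by
  have heJ : e ∈ twoSidedIdeal m := by rw [hme]; exact mem_self e
  obtain ⟨a, b0, hab⟩ := heJ
  have hb : e = a * (m * (b0 * e)) := by
    calc e = e * e := he.symm
      _ = (a * m * b0) * e := by rw [← hab]
      _ = a * (m * (b0 * e)) := by simp [mul_assoc]
  set b := b0 * e with hbdef
  have h1 : e ∈ twoSidedIdeal (m * b) := ⟨a, 1, by rw [mul_one]; exact hb⟩
  have hm' : m ∈ twoSidedIdeal e := by rw [← hme]; exact mem_self m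
  have hmJ : m ∈ twoSidedIdeal (m * b) := J_subset h1 hm'
  obtain ⟨u, hu⟩ := rstab hmJ
  -- hu : m = m * (b * u)
  have hmg : m * (b * u) = m := hu.symm
  have habs : ∀ k : ℕ, m * (b * u) ^ k = m := by
    intro k
    induction k with
    | zero => simp
    | succ k ih => rw [pow_succ, ← mul_assoc, ih, hmg]
  obtain ⟨N, hN1, hNid⟩ := exists_idem_pow (b * u)
  refine ⟨(b * u) ^ N, hNid, habs N, ?_⟩
  have hg1 : (b * u) ^ N ∈ twoSidedIdeal e := by
    obtain ⟨t, ht⟩ : ∃ t, N = t + 1 := ⟨N - 1, by omega⟩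
    refine ⟨(b * u) ^ t * b0, u, ?_⟩
    rw [ht, pow_succ, hbdef]
    simp [mul_assoc]
  have hmJg : m ∈ twoSidedIdeal ((b * u) ^ N) := ⟨m, 1, by rw [mul_one]; exact (habs N).symm⟩
  have heJm : e ∈ twoSidedIdeal m := by rw [hme]; exact mem_self e
  exact J_antisymm hg1 (J_subset hmJg heJm)

lemma lemC' [Fintype M] {n e : M} (he : e * e = e)
    (hne : twoSidedIdeal n = twoSidedIdeal e) :
    ∃ h, h * h = h ∧ h * n = n ∧ twoSidedIdeal h = twoSidedIdeal e := by
  have heJ : e ∈ twoSidedIdeal n := by rw [hne]; exact mem_self e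
  obtain ⟨c0, d, hcd⟩ := heJ
  have hc : e = ((e * c0) * n) * d := by
    calc e = e * e := he.symm
      _ = e * (c0 * n * d) := by rw [← hcd]
      _ = ((e * c0) * n) * d := by simp [mul_assoc]
  set c := e * c0 with hcdef
  have h1 : e ∈ twoSidedIdeal (c * n) := ⟨1, d, by rw [one_mul]; exact hc⟩
  have hn' : n ∈ twoSidedIdeal e := by rw [← hne]; exact mem_self n
  have hnJ : n ∈ twoSidedIdeal (c * n) := J_subset h1 hn'
  obtain ⟨u, hu⟩ := lstab hnJ
  -- hu : n = (u * c) * n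
  have hng : (u * c) * n = n := hu.symm
  have habs : ∀ k : ℕ, (u * c) ^ k * n = n := by
    intro k
    induction k with
    | zero => simp
    | succ k ih => rw [pow_succ', mul_assoc, ih, hng]
  obtain ⟨N, hN1, hNid⟩ := exists_idem_pow (u * c)
  refine ⟨(u * c) ^ N, hNid, habs N, ?_⟩
  have hg1 : (u * c) ^ N ∈ twoSidedIdeal e := by
    obtain ⟨t, ht⟩ : ∃ t, N = t + 1 := ⟨N - 1, by omega⟩
    refine ⟨u, c0 * (u * c) ^ t, ?_⟩
    rw [ht, pow_succ', hcdef]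
    simp [mul_assoc]
  have hnJg : n ∈ twoSidedIdeal ((u * c) ^ N) := ⟨1, n, by rw [one_mul]; exact (habs N).symm⟩
  have heJn : e ∈ twoSidedIdeal n := by rw [hne]; exact mem_self e
  exact J_antisymm hg1 (J_subset hnJg heJn)

lemma lemStar (h2 : Cond2 M) {g h e : M} (hg : g * g = g) (hh : h * h = h) (he : e * e = e)
    (hge : twoSidedIdeal g = twoSidedIdeal e) (hhe : twoSidedIdeal h = twoSidedIdeal e) :
    g * e * h = g * h := by
  obtain ⟨hgeg, hegE⟩ := (h2 g e hg he).mp hge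
  have hge_idem : (g * e) * (g * e) = g * e := by
    calc (g * e) * (g * e) = g * (e * g * e) := by simp [mul_assoc]
      _ = g * e := by rw [hegE]
  have hJge : twoSidedIdeal (g * e) = twoSidedIdeal e := by
    apply J_antisymm ⟨g, 1, by simp⟩ ⟨e, e, ?_⟩
    -- e = e * (g * e) * e
    simp only [← mul_assoc]
    rw [hegE, he]
  have hJgeh : twoSidedIdeal h = twoSidedIdeal (g * e) := hhe.trans hJge.symm
  obtain ⟨hhgeh, _⟩ := (h2 h (g * e) hh hge_idem).mp hJgeh
  -- hhgeh : h * (g * e) * h = h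
  obtain ⟨hghg, _⟩ := (h2 g h hg hh).mp (hge.trans hhe.symm)
  -- hghg : g * h * g = g
  calc g * e * h = (g * h * g) * e * h := by rw [hghg]
    _ = g * (h * (g * e) * h) := by simp [mul_assoc]
    _ = g * h := by rw [hhgeh]

lemma imp25 [Fintype M] (h2 : Cond2 M) : Cond5 M := by
  intro m n e he hme hne
  obtain ⟨g, hgidem, hmg, hgJ⟩ := lemC he hme
  obtain ⟨h, hhidem, hhn, hhJ⟩ := lemC' he hne
  have hstar := lemStar h2 hgidem hhidem he hgJ hhJ
  calc m * e * n = (m * g) * e * (h * n) := by rw [hmg, hhn]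
    _ = m * (g * e * h) * n := by simp [mul_assoc]
    _ = m * (g * h) * n := by rw [hstar]
    _ = (m * g) * (h * n) := by simp [mul_assoc]
    _ = m * n := by rw [hmg, hhn]

/-! ### The dagger lemma : h*f*h = h for an idempotent h below an idempotent f -/

lemma dagger [Fintype M] (h3 : Cond3 M) (h5 : Cond5 M) {h f : M}
    (hh : h * h = h) (hf : f * f = f) (hmem : h ∈ twoSidedIdeal f) :
    h * f * h = h := by
  obtain ⟨p0, q0, hpq0⟩ := hmem
  -- hpq0 : h = p0 * f * q0
  set P := h * p0 with hPdef
  set Q := q0 * h with hQdef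
  have hPQ : P * (f * Q) = h := by
    calc P * (f * Q) = h * (p0 * f * q0) * h := by rw [hPdef, hQdef]; simp [mul_assoc]
      _ = h * h * h := by rw [← hpq0]
      _ = h := by rw [hh, hh]
  obtain ⟨N, hN1, hNid⟩ := exists_idem_pow ((f * Q) * P)
  have hyp1 : (P * (f * Q)) ^ 1 * (P * (f * Q)) ^ 1 = (P * (f * Q)) ^ 1 := by
    rw [pow_one, hPQ]; exact hh
  have key := h3 P (f * Q) 1 N le_rfl hN1 hyp1 hNid
  rw [pow_one, hPQ] at key
  -- key : h * ((f*Q)*P)^N * h = h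
  have hfr : f * ((f * Q) * P) ^ N = ((f * Q) * P) ^ N := by
    obtain ⟨t, rfl⟩ : ∃ t, N = t + 1 := ⟨N - 1, by omega⟩
    rw [pow_succ', ← mul_assoc]
    congr 1
    rw [← mul_assoc f (f * Q) P, ← mul_assoc f f Q, hf]
  set r := ((f * Q) * P) ^ N with hrdef
  -- key : h * r * h = h, hfr : f * r = r
  have hht' : h * (r * h) = h := by rw [← mul_assoc]; exact key
  have ht'idem : (r * h) * (r * h) = r * h := by
    calc (r * h) * (r * h) = r * (h * r * h) := by simp [mul_assoc]
      _ = r * h := by rw [key]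
  have hJt' : twoSidedIdeal (r * h) = twoSidedIdeal h :=
    J_antisymm ⟨r, 1, by simp⟩ ⟨h, 1, by rw [mul_one]; exact hht'.symm⟩
  have hhft' : h * f * (r * h) = h := by
    calc h * f * (r * h) = h * (f * r) * h := by simp [mul_assoc]
      _ = h * r * h := by rw [hfr]
      _ = h := key
  have hJhf : twoSidedIdeal (h * f) = twoSidedIdeal h :=
    J_antisymm ⟨1, f, by simp⟩ ⟨1, r * h, by rw [one_mul]; exact hhft'.symm⟩
  have h5inst := h5 (h * f) h (r * h) ht'idem (hJhf.trans hJt'.symm) hJt'.symm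
  -- h5inst : (h*f) * (r*h) * h = (h*f) * h
  have hLHS : (h * f) * (r * h) * h = h := by
    calc (h * f) * (r * h) * h = (h * f * (r * h)) * h := by rw [← mul_assoc]
      _ = h * h := by rw [hhft']
      _ = h := hh
  calc h * f * h = (h * f) * (r * h) * h := h5inst.symm
    _ = h := hLHS

/-! ### Building the absorbing idempotents for condition (4) -/

lemma buildR [Fintype M] (h2 : Cond2 M) {e m : M} (he : e * e = e)
    (hem : e ∈ twoSidedIdeal m) :
    ∃ g, g * g = g ∧ (e * m) * g = e * m ∧ twoSidedIdeal g = twoSidedIdeal e := by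
  obtain ⟨a0, b0, hab0⟩ := hem
  have h1 : e * e * e = e * (a0 * m * b0) * e := congrArg (fun z => e * z * e) hab0
  rw [he, he] at h1
  have heab : e = (e * a0) * m * (b0 * e) := h1.trans (by simp [mul_assoc])
  set a := e * a0 with hadef
  set b := b0 * e with hbdef
  -- heab : e = a * m * b
  have hbe : b * e = b := by rw [hbdef, mul_assoc, he]
  have hσidem : (m * (b * a)) * (m * (b * a)) = m * (b * a) := by
    calc (m * (b * a)) * (m * (b * a)) = m * b * (a * m * b) * a := by simp [mul_assoc]
      _ = m * b * e * a := by rw [← heab]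
      _ = m * (b * e) * a := by rw [mul_assoc m b e]
      _ = m * b * a := by rw [hbe]
      _ = m * (b * a) := by rw [mul_assoc]
  have hσJ : twoSidedIdeal (m * (b * a)) = twoSidedIdeal e := by
    apply J_antisymm
    · exact ⟨m * b0, a, by rw [hbdef]; simp [mul_assoc]⟩
    · refine ⟨a, m * b, ?_⟩
      calc e = e * e := he.symm
        _ = (a * m * b) * (a * m * b) := by rw [← heab]
        _ = a * (m * (b * a)) * (m * b) := by simp [mul_assoc]
  obtain ⟨heσe, _⟩ := (h2 e (m * (b * a)) he hσidem).mp hσJ.symm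
  -- heσe : e * (m * (b * a)) * e = e
  have hAw : (e * m) * (b * (a * e)) = e := by
    calc (e * m) * (b * (a * e)) = e * (m * (b * a)) * e := by simp [mul_assoc]
      _ = e := heσe
  set A := e * m with hAdef
  set w := b * (a * e) with hwdef
  -- hAw : A * w = e
  have heA : e * A = A := by rw [hAdef, ← mul_assoc, he]
  refine ⟨w * A, ?_, ?_, ?_⟩
  · calc (w * A) * (w * A) = w * ((A * w) * A) := by simp [mul_assoc]
      _ = w * (e * A) := by rw [hAw]
      _ = w * A := by rw [heA]
  · calc A * (w * A) = (A * w) * A := by rw [← mul_assoc]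
      _ = e * A := by rw [hAw]
      _ = A := heA
  · apply J_antisymm
    · exact ⟨b * a, A, by rw [hwdef]; simp [mul_assoc]⟩
    · refine ⟨A, w, ?_⟩
      calc e = e * e := he.symm
        _ = (A * w) * (A * w) := by rw [hAw]
        _ = A * (w * A) * w := by simp [mul_assoc]

lemma buildL [Fintype M] (h2 : Cond2 M) {e n : M} (he : e * e = e)
    (hen : e ∈ twoSidedIdeal n) :
    ∃ hh, hh * hh = hh ∧ hh * (n * e) = n * e ∧ twoSidedIdeal hh = twoSidedIdeal e := by
  obtain ⟨c0, d0, hcd0⟩ := hen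
  have h1 : e * e * e = e * (c0 * n * d0) * e := congrArg (fun z => e * z * e) hcd0
  rw [he, he] at h1
  have hecd : e = (e * c0) * n * (d0 * e) := h1.trans (by simp [mul_assoc])
  set c := e * c0 with hcdef
  set d := d0 * e with hddef
  -- hecd : e = c * n * d
  have hde : d * e = d := by rw [hddef, mul_assoc, he]
  have hγidem : ((d * c) * n) * ((d * c) * n) = (d * c) * n := by
    calc ((d * c) * n) * ((d * c) * n) = d * (c * n * d) * (c * n) := by simp [mul_assoc]
      _ = d * e * (c * n) := by rw [← hecd]
      _ = d * (c * n) := by rw [hde]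
      _ = (d * c) * n := by rw [← mul_assoc]
  have hγJ : twoSidedIdeal ((d * c) * n) = twoSidedIdeal e := by
    apply J_antisymm
    · exact ⟨d, c0 * n, by rw [hcdef]; simp [mul_assoc]⟩
    · refine ⟨c * n, d, ?_⟩
      calc e = e * e := he.symm
        _ = (c * n * d) * (c * n * d) := by rw [← hecd]
        _ = (c * n) * ((d * c) * n) * d := by simp [mul_assoc]
  obtain ⟨heγe, _⟩ := (h2 e ((d * c) * n) he hγidem).mp hγJ.symm
  -- heγe : e * ((d * c) * n) * e = e
  have hvB : (e * (d * c)) * (n * e) = e := by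
    calc (e * (d * c)) * (n * e) = e * ((d * c) * n) * e := by simp [mul_assoc]
      _ = e := heγe
  set B := n * e with hBdef
  set v := e * (d * c) with hvdef
  -- hvB : v * B = e
  have hev : e * v = v := by rw [hvdef, ← mul_assoc, he]
  have hBe : B * e = B := by rw [hBdef, mul_assoc, he]
  refine ⟨B * v, ?_, ?_, ?_⟩
  · calc (B * v) * (B * v) = B * ((v * B) * v) := by simp [mul_assoc]
      _ = B * (e * v) := by rw [hvB]
      _ = B * v := by rw [hev]
  · calc (B * v) * B = B * (v * B) := by rw [mul_assoc]
      _ = B * e := by rw [hvB]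
      _ = B := hBe
  · apply J_antisymm
    · exact ⟨n, e * (d * c), by rw [hBdef, hvdef]⟩
    · refine ⟨v, B, ?_⟩
      calc e = e * e := he.symm
        _ = (v * B) * (v * B) := by rw [hvB]
        _ = v * (B * v) * B := by simp [mul_assoc]

lemma final_step [Fintype M] (h3 : Cond3 M) (h5 : Cond5 M)
    {e f A B g hh : M} (he : e * e = e) (hf : f * f = f)
    (hgidem : g * g = g) (hhidem : hh * hh = hh)
    (hAg : A * g = A) (hhB : hh * B = B)
    (hgJ : twoSidedIdeal g = twoSidedIdeal e) (hhJ : twoSidedIdeal hh = twoSidedIdeal e)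
    (hef : e ∈ twoSidedIdeal f) :
    A * f * B = A * B := by
  have hhmf : hh ∈ twoSidedIdeal f := by
    have h1 : hh ∈ twoSidedIdeal e := by rw [← hhJ]; exact mem_self hh
    exact J_subset hef h1
  have hdag := dagger h3 h5 hhidem hf hhmf
  -- hdag : hh * f * hh = hh
  have hJf : twoSidedIdeal (f * hh) = twoSidedIdeal hh := by
    apply J_antisymm ⟨f, 1, by simp⟩ ⟨hh, 1, ?_⟩
    rw [mul_one, ← mul_assoc]
    exact hdag.symm
  have h5fin := h5 g (f * hh) hh hhidem (hgJ.trans hhJ.symm) hJf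
  -- h5fin : g * hh * (f * hh) = g * (f * hh)
  have hkey : g * (f * hh) = g * hh := by
    calc g * (f * hh) = g * hh * (f * hh) := h5fin.symm
      _ = g * (hh * f * hh) := by simp [mul_assoc]
      _ = g * hh := by rw [hdag]
  calc A * f * B = (A * g) * f * (hh * B) := by rw [hAg, hhB]
    _ = A * (g * (f * hh)) * B := by simp [mul_assoc]
    _ = A * (g * hh) * B := by rw [hkey]
    _ = (A * g) * (hh * B) := by simp [mul_assoc]
    _ = A * B := by rw [hAg, hhB]

lemma imp_to4 [Fintype M] (h2 : Cond2 M) (h3 : Cond3 M) (h5 : Cond5 M) : Cond4 M := by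
  intro m n e f he hf hem hen hef
  obtain ⟨g, hgidem, hAg, hgJ⟩ := buildR h2 he hem
  obtain ⟨hh, hhidem, hhB, hhJ⟩ := buildL h2 he hen
  have hfin := final_step h3 h5 he hf hgidem hhidem hAg hhB hgJ hhJ hef
  -- hfin : (e * m) * f * (n * e) = (e * m) * (n * e)
  calc e * m * f * n * e = (e * m) * f * (n * e) := by simp [mul_assoc]
    _ = (e * m) * (n * e) := hfin
    _ = e * m * n * e := by simp [mul_assoc]

/-! ### (4) → (2) and (5) → (2) -/

lemma imp42 (h4 : Cond4 M) : Cond2 M := by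
  intro e f he hf
  constructor
  · intro hJ
    have hef : e ∈ twoSidedIdeal f := by rw [← hJ]; exact mem_self e
    have hfe : f ∈ twoSidedIdeal e := by rw [hJ]; exact mem_self f
    have h1 := h4 1 1 e f he hf ⟨e, 1, by simp⟩ ⟨e, 1, by simp⟩ hef
    have h2' := h4 1 1 f e hf he ⟨f, 1, by simp⟩ ⟨f, 1, by simp⟩ hfe
    constructor
    · simpa [he] using h1
    · simpa [hf] using h2'
  · rintro ⟨ha, hb⟩
    exact J_antisymm ⟨e, e, ha.symm⟩ ⟨f, f, hb.symm⟩

lemma imp52 (h5 : Cond5 M) : Cond2 M := by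
  intro e f he hf
  constructor
  · intro hJ
    have h1 := h5 e e f hf hJ hJ
    have h2' := h5 f f e he hJ.symm hJ.symm
    constructor
    · rw [h1]; exact he
    · rw [h2']; exact hf
  · rintro ⟨ha, hb⟩
    exact J_antisymm ⟨e, e, ha.symm⟩ ⟨f, f, hb.symm⟩

end RectangularAux

open RectangularAux in
/-- Equivalent characterizations of rectangular monoids (the class `DO`). -/
theorem rectangular_monoid_tfae {M : Type*} [Monoid M] [Fintype M] :
    List.TFAE [
      -- (1) M is rectangular: each conjugacy class of idempotents is a subsemigroup
      ∀ e f : M, e * e = e → f * f = f → twoSidedIdeal e = twoSidedIdeal f →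
        (e * f) * (e * f) = e * f ∧ twoSidedIdeal (e * f) = twoSidedIdeal e,
      -- (2)
      ∀ e f : M, e * e = e → f * f = f →
        (twoSidedIdeal e = twoSidedIdeal f ↔ (e * f * e = e ∧ f * e * f = f)),
      -- (3) the ω-power condition `(xy)^ω (yx)^ω (xy)^ω = (xy)^ω`
      ∀ (x y : M) (k l : ℕ), 1 ≤ k → 1 ≤ l →
        (x * y) ^ k * (x * y) ^ k = (x * y) ^ k →
        (y * x) ^ l * (y * x) ^ l = (y * x) ^ l →
        (x * y) ^ k * (y * x) ^ l * (x * y) ^ k = (x * y) ^ k,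
      -- (4)
      ∀ m n e f : M, e * e = e → f * f = f →
        e ∈ twoSidedIdeal m → e ∈ twoSidedIdeal n → e ∈ twoSidedIdeal f →
        e * m * f * n * e = e * m * n * e,
      -- (5)
      ∀ m n e : M, e * e = e →
        twoSidedIdeal m = twoSidedIdeal e → twoSidedIdeal n = twoSidedIdeal e →
        m * e * n = m * n ] := by
  tfae_have 1 → 2 := imp12
  tfae_have 2 → 1 := imp21
  tfae_have 2 → 3 := imp23
  tfae_have 3 → 2 := imp32
  tfae_have 2 → 5 := imp25
  tfae_have 3 → 4 := fun h3 => imp_to4 (imp32 h3) h3 (imp25 (imp32 h3))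
  tfae_have 4 → 2 := imp42
  tfae_have 5 → 2 := imp52
  tfae_finish
end

section
/- Let M be a finite rectangular monoid, let e ∈ M be an idempotent, let X = MeM and M_X = {m ∈ M | X ⊆ MmM}. Then: (i) the map ρ_e : M_X → e*M*e given by ρ_e(m) = e*m*e satisfies ρ_e(m*n) = ρ_e(m)*ρ_e(n) for all m, n ∈ M_X, and ρ_e(1) = e; (ii) for every m ∈ M_X the element e*m*e is a unit of the monoid e*M*e (whose identity is e): there exists u ∈ e*M*e with u*(e*m*e) = e = (e*m*e)*u; (iii) every unit g of e*M*e lies in M_X and ρ_e(g) = g (so ρ_e is a retraction of M_X onto the maximal subgroup G_e of units of e*M*e); (iv) if f ∈ M is an idempotent with MfM ⊆ MeM, then f*(e*m*e)*f = f*m*f for all m ∈ M_X. -/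
/-- A finite monoid is rectangular if for all idempotents `e, f` with `MeM = MfM`,
the product `e*f` is idempotent and `M(e*f)M = MeM`. -/
def IsRectangular (M : Type*) [Monoid M] : Prop :=
  ∀ e f : M, e * e = e → f * f = f → twoSidedIdeal e = twoSidedIdeal f →
    (e * f) * (e * f) = e * f ∧ twoSidedIdeal (e * f) = twoSidedIdeal e

section Helpers

variable {M : Type*} [Monoid M]

lemma rmul_ext {x y : M} (h : x = y) (z : M) : x * z = y * z := by rw [h]

lemma ideal_self (x : M) : x ∈ twoSidedIdeal x := ⟨1, 1, by simp⟩

lemma ideal_mono {x y : M} (h : x ∈ twoSidedIdeal y) :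
    twoSidedIdeal x ⊆ twoSidedIdeal y := by
  obtain ⟨p, q, hx⟩ := h
  rintro z ⟨r, s, rfl⟩
  exact ⟨r * p, q * s, by rw [hx]; simp [mul_assoc]⟩

lemma exists_pow_idem [Fintype M] (x : M) :
    ∃ k : ℕ, 0 < k ∧ x ^ k * x ^ k = x ^ k := by
  obtain ⟨a, b, hab, heq⟩ := Finite.exists_ne_map_eq_of_infinite (fun n : ℕ => x ^ n)
  -- wlog a < b
  obtain ⟨i, j, hij, hpow⟩ : ∃ i j : ℕ, i < j ∧ x ^ i = x ^ j := by
    rcases lt_or_gt_of_ne hab with h | h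
    · exact ⟨a, b, h, heq⟩
    · exact ⟨b, a, h, heq.symm⟩
  set p := j - i with hp
  have hp0 : 0 < p := by omega
  have hji : j = i + p := by omega
  have shift : ∀ s : ℕ, x ^ (i + s) = x ^ (i + s + p) := by
    intro s
    calc x ^ (i + s) = x ^ i * x ^ s := pow_add x i s
      _ = x ^ j * x ^ s := by rw [hpow]
      _ = x ^ (j + s) := (pow_add x j s).symm
      _ = x ^ (i + s + p) := by rw [show j + s = i + s + p from by omega]
  have shiftk : ∀ t s : ℕ, x ^ (i + t) = x ^ (i + t + s * p) := by
    intro t s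
    induction s with
    | zero => simp
    | succ s ih =>
      calc x ^ (i + t) = x ^ (i + t + s * p) := ih
        _ = x ^ (i + (t + s * p)) := by rw [show i + t + s * p = i + (t + s * p) from by ring]
        _ = x ^ (i + (t + s * p) + p) := shift (t + s * p)
        _ = x ^ (i + t + (s + 1) * p) := by
            rw [show i + (t + s * p) + p = i + t + (s + 1) * p from by ring]
  have hk1 : i + 1 ≤ (i + 1) * p := Nat.le_mul_of_pos_right _ hp0
  refine ⟨(i + 1) * p, by positivity, ?_⟩
  have h := shiftk ((i + 1) * p - i) (i + 1)
  rw [show i + ((i + 1) * p - i) = (i + 1) * p from by omega] at h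
  rw [← pow_add]
  exact h.symm

lemma lemB [Fintype M] {e h : M} (he : e * e = e) (hh : h * h = h)
    (heh : e * h = h) (hhe : h * e = h) (hmem : e ∈ twoSidedIdeal h) : h = e := by
  obtain ⟨a, b, hab⟩ := hmem   -- hab : e = a * h * b
  have base : e = (a * h) * e * b := by
    rw [mul_assoc a h e, hhe]; exact hab
  have hseb : ∀ k : ℕ, e = (a * h) ^ k * e * b ^ k := by
    intro k
    induction k with
    | zero => simp
    | succ k ih =>
      calc e = (a * h) * e * b := base
        _ = (a * h) * ((a * h) ^ k * e * b ^ k) * b := by rw [← ih]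
        _ = (a * h) ^ (k + 1) * e * b ^ (k + 1) := by
            rw [pow_succ', pow_succ]; simp only [mul_assoc]
  obtain ⟨k, hk0, hbk⟩ := exists_pow_idem b
  have hs' : e = (a * h) ^ k * (e * b ^ k) := by
    have := hseb k; rw [mul_assoc] at this; exact this
  have h2 : e * b ^ k = e := by
    have h3 := rmul_ext (hseb k) (b ^ k)
    simp only [mul_assoc] at h3
    rw [hbk] at h3
    rw [← mul_assoc] at h3
    exact h3.trans ((hseb k).symm)
  have h4 : e = (a * h) ^ k * e := by rw [h2] at hs'; exact hs'
  obtain ⟨k', rfl⟩ : ∃ k', k = k' + 1 := ⟨k - 1, by omega⟩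
  rw [pow_succ] at h4
  simp only [mul_assoc] at h4
  rw [hhe] at h4
  -- h4 : e = (a*h)^k' * (a * h)
  have h6 : e * h = e := by
    have h5 := rmul_ext h4 h
    simp only [mul_assoc] at h5
    rw [hh] at h5
    exact h5.trans h4.symm
  exact heh.symm.trans h6

lemma lemC [Fintype M] (hrect : IsRectangular M) {e K : M} (he : e * e = e)
    (hK : K * K = K) (hid : twoSidedIdeal K = twoSidedIdeal e) : e * K * e = e := by
  obtain ⟨h1, h2⟩ := hrect e K he hK hid.symm
  obtain ⟨h3, h4⟩ := hrect (e * K) e h1 he h2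
  have heh : e * (e * K * e) = e * K * e := by
    simp only [← mul_assoc]; rw [he]
  have hhe : (e * K * e) * e = e * K * e := by
    simp only [mul_assoc]; rw [he]
  have hmem : e ∈ twoSidedIdeal (e * K * e) := by
    rw [h4.trans h2]; exact ideal_self e
  exact lemB he h3 heh hhe hmem

lemma lemU [Fintype M] (hrect : IsRectangular M) {e m : M} (he : e * e = e)
    (hm : e ∈ twoSidedIdeal m) :
    ∃ u : M, u = e * u * e ∧ u * (e * m * e) = e ∧ (e * m * e) * u = e := by
  have hex : ∀ x : M, e * (e * x) = e * x := fun x => by rw [← mul_assoc, he]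
  obtain ⟨a₀, b₀, h0⟩ := hm   -- e = a₀ * m * b₀
  set a := e * a₀ with hadef
  set b := b₀ * e with hbdef
  have hea : e * a = a := by rw [hadef, ← mul_assoc, he]
  have hbe : b * e = b := by rw [hbdef, mul_assoc, he]
  have heax : ∀ x : M, e * (a * x) = a * x := fun x => by rw [← mul_assoc, hea]
  have hab : a * (m * b) = e := by
    rw [hadef, hbdef]
    calc e * a₀ * (m * (b₀ * e)) = e * (a₀ * m * b₀) * e := by simp only [mul_assoc]
      _ = e := by rw [← h0, he, he]
  have habx : ∀ x : M, a * (m * (b * x)) = e * x := fun x => by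
    have := rmul_ext hab x; simp only [mul_assoc] at this; exact this
  -- F2 = m*(b*a)
  have hF2 : (m * (b * a)) * (m * (b * a)) = m * (b * a) := by
    simp only [mul_assoc]
    rw [habx a, hea]
  have memF2 : (m * (b * a)) ∈ twoSidedIdeal e := ⟨m * b, a, by simp only [mul_assoc, hea]⟩
  have memeF2 : e ∈ twoSidedIdeal (m * (b * a)) :=
    ⟨a, m * b, by simp only [mul_assoc]; rw [habx, hab, he]⟩
  have idF2 : twoSidedIdeal (m * (b * a)) = twoSidedIdeal e :=
    Set.Subset.antisymm (ideal_mono memF2) (ideal_mono memeF2)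
  have R1 := lemC hrect he hF2 idF2   -- e * (m*(b*a)) * e = e
  have R1' : e * (m * (b * (a * e))) = e := by simpa [mul_assoc] using R1
  have R1x : ∀ x : M, e * (m * (b * (a * (e * x)))) = e * x := fun x => by
    have := rmul_ext R1' x; simpa [mul_assoc] using this
  -- F1 = b*(a*m)
  have hF1 : (b * (a * m)) * (b * (a * m)) = b * (a * m) := by
    simp only [mul_assoc]
    rw [habx (a * m), heax]
  have memF1 : (b * (a * m)) ∈ twoSidedIdeal e := ⟨b, a * m, by simp only [mul_assoc, heax]⟩
  have memeF1 : e ∈ twoSidedIdeal (b * (a * m)) :=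
    ⟨a * m, b, by simp only [mul_assoc]; rw [habx, hab, he]⟩
  have idF1 : twoSidedIdeal (b * (a * m)) = twoSidedIdeal e :=
    Set.Subset.antisymm (ideal_mono memF1) (ideal_mono memeF1)
  have R2 := lemC hrect he hF1 idF1
  have R2' : e * (b * (a * (m * e))) = e := by simpa [mul_assoc] using R2
  have R2x : ∀ x : M, e * (b * (a * (m * (e * x)))) = e * x := fun x => by
    have := rmul_ext R2' x; simpa [mul_assoc] using this
  -- J = m*(e*(b*a))
  have hJ : (m * (e * (b * a))) * (m * (e * (b * a))) = m * (e * (b * a)) := by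
    simp only [mul_assoc]
    rw [R2x (b * a)]
  have memJ : (m * (e * (b * a))) ∈ twoSidedIdeal e := ⟨m, b * a, by simp only [mul_assoc]⟩
  have memeJ : e ∈ twoSidedIdeal (m * (e * (b * a))) :=
    ⟨e * (b * a), m * e, by simp only [mul_assoc]; rw [R2x, R2']⟩
  have idJ : twoSidedIdeal (m * (e * (b * a))) = twoSidedIdeal e :=
    Set.Subset.antisymm (ideal_mono memJ) (ideal_mono memeJ)
  have S1 := lemC hrect he hJ idJ
  have S1' : e * (m * (e * (b * (a * e)))) = e := by simpa [mul_assoc] using S1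
  -- J' = b*(a*(e*m))
  have hJ' : (b * (a * (e * m))) * (b * (a * (e * m))) = b * (a * (e * m)) := by
    simp only [mul_assoc]
    rw [R1x m]
  have memJ' : (b * (a * (e * m))) ∈ twoSidedIdeal e := ⟨b * a, m, by simp only [mul_assoc]⟩
  have memeJ' : e ∈ twoSidedIdeal (b * (a * (e * m))) :=
    ⟨e * m, b * (a * e), by simp only [mul_assoc]; rw [R1x, R1']⟩
  have idJ' : twoSidedIdeal (b * (a * (e * m))) = twoSidedIdeal e :=
    Set.Subset.antisymm (ideal_mono memJ') (ideal_mono memeJ')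
  have S2 := lemC hrect he hJ' idJ'
  have S2' : e * (b * (a * (e * (m * e)))) = e := by simpa [mul_assoc] using S2
  refine ⟨e * (b * (a * e)), ?_, ?_, ?_⟩
  · simp only [mul_assoc, hex, he]
  · simp only [mul_assoc, hex]; exact S2'
  · simp only [mul_assoc, hex]; exact S1'

lemma lemI [Fintype M] (hrect : IsRectangular M) {e m n : M} (he : e * e = e)
    (hm : e ∈ twoSidedIdeal m) (hn : e ∈ twoSidedIdeal n) :
    e * (m * n) * e = (e * m * e) * (e * n * e) := by
  have hex : ∀ x : M, e * (e * x) = e * x := fun x => by rw [← mul_assoc, he]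
  obtain ⟨u, hu1, hu2, hu3⟩ := lemU hrect he hm
  obtain ⟨v, hv1, hv2, hv3⟩ := lemU hrect he hn
  have hue : u * e = u := by
    nth_rewrite 1 [hu1]; simp only [mul_assoc, he]; rw [← mul_assoc, ← hu1]
  have heu : e * u = u := by
    nth_rewrite 1 [hu1]; simp only [← mul_assoc, he]; exact hu1.symm
  have hve : v * e = v := by
    nth_rewrite 1 [hv1]; simp only [mul_assoc, he]; rw [← mul_assoc, ← hv1]
  have hev : e * v = v := by
    nth_rewrite 1 [hv1]; simp only [← mul_assoc, he]; exact hv1.symm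
  have heux : ∀ x : M, e * (u * x) = u * x := fun x => by rw [← mul_assoc, heu]
  have hume : u * (m * e) = e := by
    rw [← hue]; simpa [mul_assoc] using hu2
  have hvne : v * (n * e) = e := by
    rw [← hve]; simpa [mul_assoc] using hv2
  have humu : u * (m * u) = u := by
    have h := rmul_ext hume u
    simp only [mul_assoc] at h
    rw [heu] at h; exact h
  have hvnv : v * (n * v) = v := by
    have h := rmul_ext hvne v
    simp only [mul_assoc] at h
    rw [hev] at h; exact h
  have hf1 : (u * m) * (u * m) = u * m := by
    have h := rmul_ext humu m; simp only [mul_assoc] at h ⊢; exact h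
  have hg2 : (n * v) * (n * v) = n * v := by
    have h := congrArg (fun z => n * z) hvnv
    simp only [mul_assoc] at h ⊢; exact h
  have memf1 : (u * m) ∈ twoSidedIdeal e := ⟨u, m, by rw [hue]⟩
  have memef1 : e ∈ twoSidedIdeal (u * m) :=
    ⟨1, e, by simp only [one_mul, mul_assoc]; rw [hume]⟩
  have memg2 : (n * v) ∈ twoSidedIdeal e := ⟨n, v, by rw [mul_assoc, hev]⟩
  have henv : e * (n * v) = e := by
    rw [← hev]; simpa [mul_assoc] using hv3
  have memeg2 : e ∈ twoSidedIdeal (n * v) := ⟨e, 1, by rw [mul_one]; exact henv.symm⟩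
  have idf1 : twoSidedIdeal (u * m) = twoSidedIdeal e :=
    Set.Subset.antisymm (ideal_mono memf1) (ideal_mono memef1)
  have idg2 : twoSidedIdeal (n * v) = twoSidedIdeal e :=
    Set.Subset.antisymm (ideal_mono memg2) (ideal_mono memeg2)
  obtain ⟨hK, hKid⟩ := hrect (u * m) (n * v) hf1 hg2 (idf1.trans idg2.symm)
  have key := lemC hrect he hK (hKid.trans idf1)
  simp only [mul_assoc] at key
  rw [hve, heux] at key
  -- key : u * (m * (n * v)) = e
  calc e * (m * n) * e
      = ((e * m * e) * u) * (m * n) * (v * (e * n * e)) := by rw [hu3, hv2]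
    _ = (e * m * e) * (u * (m * (n * v))) * (e * n * e) := by simp only [mul_assoc]
    _ = (e * m * e) * e * (e * n * e) := by rw [key]
    _ = (e * m * e) * (e * n * e) := by simp only [mul_assoc, hex, he]

end Helpers

/-- In a rectangular monoid, `ρ_e(m) = e*m*e` is a retraction of `M_X` onto the maximal
subgroup `G_e` of units of `e*M*e`, compatible with going down to smaller idempotents. -/
theorem retraction_onto_maximal_subgroup {M : Type*} [Monoid M] [Fintype M]
    (hrect : IsRectangular M) (e : M) (he : e * e = e) :
    -- (i) `ρ_e` is a homomorphism on `M_X = {m | X ⊆ MmM}`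
    (∀ m n : M, twoSidedIdeal e ⊆ twoSidedIdeal m → twoSidedIdeal e ⊆ twoSidedIdeal n →
      e * (m * n) * e = (e * m * e) * (e * n * e)) ∧
    (e * 1 * e = e) ∧
    -- (ii) for `m ∈ M_X`, `e*m*e` is a unit of the monoid `e*M*e` (with identity `e`)
    (∀ m : M, twoSidedIdeal e ⊆ twoSidedIdeal m →
      ∃ u : M, u = e * u * e ∧ u * (e * m * e) = e ∧ (e * m * e) * u = e) ∧
    -- (iii) every unit `g` of `e*M*e` lies in `M_X` and is fixed by `ρ_e`
    (∀ g : M, g = e * g * e → (∃ u : M, u = e * u * e ∧ u * g = e ∧ g * u = e) →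
      twoSidedIdeal e ⊆ twoSidedIdeal g ∧ e * g * e = g) ∧
    -- (iv) compatibility with smaller idempotents: `ρ_f ∘ ρ_e = ρ_f` on `M_X`
    (∀ f : M, f * f = f → twoSidedIdeal f ⊆ twoSidedIdeal e →
      ∀ m : M, twoSidedIdeal e ⊆ twoSidedIdeal m → f * (e * m * e) * f = f * m * f) := by
  refine ⟨?_, ?_, ?_, ?_, ?_⟩
  · intro m n hm hn
    exact lemI hrect he (hm (ideal_self e)) (hn (ideal_self e))
  · rw [mul_one, he]
  · intro m hm
    exact lemU hrect he (hm (ideal_self e))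
  · rintro g hg ⟨u, hu1, hu2, hu3⟩
    refine ⟨ideal_mono ⟨u, 1, by rw [mul_one]; exact hu2.symm⟩, hg.symm⟩
  · intro f hf hfsub m hm
    have hfe : f ∈ twoSidedIdeal e := hfsub (ideal_self f)
    have hem : e ∈ twoSidedIdeal m := hm (ideal_self e)
    have hfm : f ∈ twoSidedIdeal m := hm hfe
    have hfx : ∀ x : M, f * (f * x) = f * x := fun x => by rw [← mul_assoc, hf]
    obtain ⟨u, hu1, hu2, hu3⟩ := lemU hrect he hem
    have hue : u * e = u := by
      nth_rewrite 1 [hu1]; simp only [mul_assoc, he]; rw [← mul_assoc, ← hu1]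
    have hume : u * (m * e) = e := by
      rw [← hue]; simpa [mul_assoc] using hu2
    have hfme : f ∈ twoSidedIdeal (m * e) := by
      have h1 : e ∈ twoSidedIdeal (m * e) := ⟨u, 1, by rw [mul_one]; exact hume.symm⟩
      exact ideal_mono h1 hfe
    have hfef : f * e * f = f := by
      have hxx : (f * e * f) * (f * e * f) = f * e * f := by
        have h := lemI hrect hf hfe hfe
        rw [he] at h; exact h.symm
      obtain ⟨w, hw1, hw2, hw3⟩ := lemU hrect hf hfe
      have h5 : f = f * (f * e * f) :=
        calc f = w * (f * e * f) := hw2.symm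
          _ = w * ((f * e * f) * (f * e * f)) := by rw [hxx]
          _ = (w * (f * e * f)) * (f * e * f) := (mul_assoc w (f * e * f) (f * e * f)).symm
          _ = f * (f * e * f) := by rw [hw2]
      have h6 : f * (f * e * f) = f * e * f := by
        simp only [← mul_assoc]; rw [hf]
      exact h6.symm.trans h5.symm
    calc f * (e * m * e) * f
        = f * (e * (m * e)) * f := by rw [mul_assoc e m e]
      _ = (f * e * f) * (f * (m * e) * f) := lemI hrect hf hfe hfme
      _ = f * (f * (m * e) * f) := by rw [hfef]
      _ = f * ((f * m * f) * (f * e * f)) := by rw [lemI hrect hf hfm hfe]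
      _ = f * ((f * m * f) * f) := by rw [hfef]
      _ = f * m * f := by simp only [mul_assoc, hfx, hf]
end

section
/- Let M be a finite rectangular monoid, let e, f ∈ M be idempotents with MeM = MfM, and let m ∈ M satisfy MeM ⊆ MmM and e*m*e = e. Then f*m*f = f. (This is the key step in proving that the canonical map from M onto its maximal Clifford monoid image Λ*(M) is an LI-morphism.) -/
namespace LiKeyAux

variable {M : Type*} [Monoid M]

lemma mem_tsi_self (x : M) : x ∈ twoSidedIdeal x := ⟨1, 1, by simp⟩

lemma tsi_subset {x y : M} (h : y ∈ twoSidedIdeal x) :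
    twoSidedIdeal y ⊆ twoSidedIdeal x := by
  obtain ⟨a, b, rfl⟩ := h
  rintro z ⟨c, d, rfl⟩
  exact ⟨c * a, b * d, by simp [mul_assoc]⟩

lemma tsi_eq {x y : M} (hxy : x ∈ twoSidedIdeal y) (hyx : y ∈ twoSidedIdeal x) :
    twoSidedIdeal x = twoSidedIdeal y :=
  le_antisymm (tsi_subset hxy) (tsi_subset hyx)

lemma exists_pow_idem [Finite M] (c : M) : ∃ n, 0 < n ∧ c ^ n * c ^ n = c ^ n := by
  have main : ∀ i j : ℕ, i < j → c ^ i = c ^ j → ∃ n, 0 < n ∧ c ^ n * c ^ n = c ^ n := by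
    intro i j hij hcij
    set p := j - i with hpdef
    have hp0 : 0 < p := by omega
    have step : ∀ s, i ≤ s → c ^ (s + p) = c ^ s := by
      intro s hs
      obtain ⟨t, rfl⟩ : ∃ t, s = i + t := ⟨s - i, by omega⟩
      have hip : c ^ (i + p) = c ^ i := by rw [show i + p = j from by omega, ← hcij]
      calc c ^ (i + t + p) = c ^ ((i + p) + t) := by rw [show i + t + p = (i + p) + t from by omega]
      _ = c ^ (i + p) * c ^ t := pow_add c (i + p) t
      _ = c ^ i * c ^ t := by rw [hip]
      _ = c ^ (i + t) := (pow_add c i t).symm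
    have stepk : ∀ k s, i ≤ s → c ^ (s + k * p) = c ^ s := by
      intro k
      induction k with
      | zero => simp
      | succ k ih =>
        intro s hs
        rw [show s + (k + 1) * p = (s + k * p) + p from by ring,
          step (s + k * p) (le_trans hs (Nat.le_add_right s (k * p))), ih s hs]
    refine ⟨(i + 1) * p, Nat.mul_pos (by omega) hp0, ?_⟩
    rw [← pow_add]
    exact stepk (i + 1) ((i + 1) * p)
      (le_trans (by omega) (Nat.le_mul_of_pos_right (i + 1) hp0))
  obtain ⟨i, j, hne, hpair⟩ := Finite.exists_ne_map_eq_of_infinite (fun n : ℕ => c ^ n)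
  rcases hne.lt_or_gt with h | h
  · exact main i j h hpair
  · exact main j i h hpair.symm

lemma pump [Finite M] {u a c : M} (h : u = a * u * c) : ∃ k, 0 < k ∧ u = u * c ^ k := by
  have hn : ∀ n, u = a ^ n * u * c ^ n := by
    intro n
    induction n with
    | zero => simp
    | succ n ih =>
      calc u = a * u * c := h
      _ = a * (a ^ n * u * c ^ n) * c := by rw [← ih]
      _ = a ^ (n + 1) * u * c ^ (n + 1) := by
        rw [pow_succ', pow_succ]; simp only [mul_assoc]
  obtain ⟨n, hn0, hni⟩ := exists_pow_idem c
  refine ⟨n, hn0, ?_⟩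
  calc u = a ^ n * u * c ^ n := hn n
  _ = a ^ n * u * (c ^ n * c ^ n) := by rw [hni]
  _ = (a ^ n * u * c ^ n) * c ^ n := by rw [← mul_assoc]
  _ = u * c ^ n := by rw [← hn n]

/-- An idempotent `x` below an idempotent `e`, with `e` in the ideal of `x`, equals `e`. -/
lemma lemA [Finite M] {e x : M} (he : e * e = e) (hx : x * x = x) (hxe : x * e = x)
    (hex : e * x = x) (hmem : e ∈ twoSidedIdeal x) : x = e := by
  obtain ⟨a, b, hab⟩ := hmem
  have key : e = (a * x) * e * (x * b) := by
    have h1 : (a * x) * e * (x * b) = a * x * b := by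
      rw [mul_assoc a x e, hxe, mul_assoc a x (x * b), ← mul_assoc x x b, hx, ← mul_assoc]
    rw [h1]; exact hab
  obtain ⟨k, hk, hek⟩ := pump key
  obtain ⟨k', rfl⟩ : ∃ k', k = k' + 1 := ⟨k - 1, by omega⟩
  have h2 : e = x * (b * (x * b) ^ k') := by
    calc e = e * (x * b) ^ (k' + 1) := hek
    _ = e * ((x * b) * (x * b) ^ k') := by rw [pow_succ']
    _ = x * (b * (x * b) ^ k') := by
      rw [← mul_assoc e (x * b) _, ← mul_assoc e x b, hex, mul_assoc x b _]
  calc x = x * e := hxe.symm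
  _ = x * (x * (b * (x * b) ^ k')) := by rw [← h2]
  _ = (x * x) * (b * (x * b) ^ k') := by rw [mul_assoc]
  _ = x * (b * (x * b) ^ k') := by rw [hx]
  _ = e := h2.symm

end LiKeyAux

open LiKeyAux in
/-- Key step in the proof that the map onto the maximal Clifford monoid image is an
LI-morphism: in a rectangular monoid, if `e, f` are conjugate idempotents and
`m ∈ M_{MeM}` satisfies `e*m*e = e`, then `f*m*f = f`. -/
theorem li_morphism_key_step {M : Type*} [Monoid M] [Fintype M]
    (hrect : IsRectangular M) (e f m : M) (he : e * e = e) (hf : f * f = f)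
    (hef : twoSidedIdeal e = twoSidedIdeal f)
    (hm : twoSidedIdeal e ⊆ twoSidedIdeal m) (heme : e * m * e = e) :
    f * m * f = f := by
  classical
  -- closure of the class of `e` under products (rectangularity)
  have band_mul : ∀ u v : M, u * u = u → v * v = v →
      twoSidedIdeal u = twoSidedIdeal e → twoSidedIdeal v = twoSidedIdeal e →
      (u * v) * (u * v) = u * v ∧ twoSidedIdeal (u * v) = twoSidedIdeal e := by
    intro u v hu hv hiu hiv
    obtain ⟨h1, h2⟩ := hrect u v hu hv (hiu.trans hiv.symm)
    exact ⟨h1, h2.trans hiu⟩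
  -- rectangular band identity on the class of `e`
  have band_sand : ∀ u v : M, u * u = u → v * v = v →
      twoSidedIdeal u = twoSidedIdeal e → twoSidedIdeal v = twoSidedIdeal e →
      u * v * u = u := by
    intro u v hu hv hiu hiv
    obtain ⟨hvu1, hvu2⟩ := band_mul v u hv hu hiv hiu
    obtain ⟨h1, h2⟩ := hrect u (v * u) hu hvu1 (hiu.trans hvu2.symm)
    have hx : u * (v * u) = u := by
      apply lemA hu h1
      · rw [mul_assoc u (v * u) u, mul_assoc v u u, hu]
      · rw [← mul_assoc u u (v * u), hu]
      · rw [h2]; exact mem_tsi_self u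
    calc u * v * u = u * (v * u) := by rw [mul_assoc]
    _ = u := hx
  -- `m*e` and `e*m` are idempotents in the class of `e`
  have hme_i : (m * e) * (m * e) = m * e := by
    rw [mul_assoc m e (m * e), ← mul_assoc e m e, heme]
  have hem_i : (e * m) * (e * m) = e * m := by
    rw [← mul_assoc (e * m) e m, heme]
  have hIme : twoSidedIdeal (m * e) = twoSidedIdeal e :=
    tsi_eq ⟨m, 1, by rw [mul_one]⟩ ⟨e, 1, by rw [mul_one, ← mul_assoc e m e, heme]⟩
  have hIem : twoSidedIdeal (e * m) = twoSidedIdeal e :=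
    tsi_eq ⟨1, m, by rw [one_mul]⟩ ⟨1, e, by rw [one_mul]; exact heme.symm⟩
  have hIf : twoSidedIdeal f = twoSidedIdeal e := hef.symm
  -- the idempotent `m*(e*m)` in the class
  obtain ⟨hk_i, hk_I⟩ := band_mul (m * e) (e * m) hme_i hem_i hIme hIem
  have keq : (m * e) * (e * m) = m * (e * m) := by
    rw [mul_assoc m e (e * m), ← mul_assoc e e m, he]
  rw [keq] at hk_i hk_I
  -- key identity A5' : f*(m*(e*(m*f))) = f
  have A5 : f * (m * (e * m)) * f = f := band_sand f (m * (e * m)) hf hk_i hIf hk_I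
  have A5' : f * (m * (e * (m * f))) = f := by
    have h1 : f * (m * (e * (m * f))) = f * (m * (e * m)) * f := by
      simp only [mul_assoc]
    rw [h1, A5]
  -- key identity A8 : (e*m)*(f*(m*e)) = e
  obtain ⟨hα_i, hα_I⟩ := band_mul f (m * e) hf hme_i hIf hIme
  obtain ⟨hβ_i, hβ_I⟩ := band_mul (e * m) f hem_i hf hIem hIf
  obtain ⟨hx1_i, hx1_I⟩ := band_mul ((e * m) * f) (f * (m * e)) hβ_i hα_i hβ_I hα_I
  have x1eq : ((e * m) * f) * (f * (m * e)) = (e * m) * (f * (m * e)) := by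
    rw [mul_assoc (e * m) f (f * (m * e)), ← mul_assoc f f (m * e), hf]
  rw [x1eq] at hx1_i hx1_I
  have A8 : (e * m) * (f * (m * e)) = e := by
    apply lemA he hx1_i
    · rw [mul_assoc (e * m) (f * (m * e)) e, mul_assoc f (m * e) e, mul_assoc m e e, he]
    · rw [← mul_assoc e (e * m) (f * (m * e)), ← mul_assoc e e m, he]
    · rw [hx1_I]; exact mem_tsi_self e
  -- the two idempotents ε₁ = (m*f)*(m*e) and ε₂ = (m*e)*(m*f)
  have hε1_i : ((m * f) * (m * e)) * ((m * f) * (m * e)) = (m * f) * (m * e) := by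
    have inner : (m * e) * ((m * f) * (m * e)) = m * e := by
      have h1 : (m * e) * ((m * f) * (m * e)) = m * ((e * m) * (f * (m * e))) := by
        simp only [mul_assoc]
      rw [h1, A8]
    rw [mul_assoc (m * f) (m * e) ((m * f) * (m * e)), inner]
  have hε2_i : ((m * e) * (m * f)) * ((m * e) * (m * f)) = (m * e) * (m * f) := by
    have inner : (m * f) * ((m * e) * (m * f)) = m * f := by
      have h1 : (m * f) * ((m * e) * (m * f)) = m * (f * (m * (e * (m * f)))) := by
        simp only [mul_assoc]
      rw [h1, A5']
    rw [mul_assoc (m * e) (m * f) ((m * e) * (m * f)), inner]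
  have hIε1 : twoSidedIdeal ((m * f) * (m * e)) = twoSidedIdeal e := by
    refine tsi_eq ⟨(m * f) * m, 1, by rw [mul_one, mul_assoc (m * f) m e]⟩ ⟨e, 1, ?_⟩
    rw [mul_one]
    have h1 : e * ((m * f) * (m * e)) = (e * m) * (f * (m * e)) := by
      simp only [mul_assoc]
    rw [h1, A8]
  have hIε2 : twoSidedIdeal ((m * e) * (m * f)) = twoSidedIdeal e := by
    have h1 : (m * e) * (m * f) ∈ twoSidedIdeal f :=
      ⟨(m * e) * m, 1, by rw [mul_one, mul_assoc (m * e) m f]⟩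
    have h2 : f ∈ twoSidedIdeal ((m * e) * (m * f)) := by
      refine ⟨f * (m * e), 1, ?_⟩
      rw [mul_one]
      have h3 : (f * (m * e)) * ((m * e) * (m * f)) = f * (((m * e) * (m * e)) * (m * f)) := by
        simp only [mul_assoc]
      rw [h3, hme_i]
      have h4 : f * ((m * e) * (m * f)) = f * (m * (e * (m * f))) := by
        simp only [mul_assoc]
      rw [h4, A5']
    exact (tsi_eq h1 h2).trans hIf
  -- rectangularity applied to ε₁, ε₂ shows that `m*f` is an idempotent in the class
  obtain ⟨hmf_i, hmf_I⟩ :=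
    band_mul ((m * f) * (m * e)) ((m * e) * (m * f)) hε1_i hε2_i hIε1 hIε2
  have εeq : ((m * f) * (m * e)) * ((m * e) * (m * f)) = m * f := by
    have h1 : ((m * f) * (m * e)) * ((m * e) * (m * f))
        = (m * f) * (((m * e) * (m * e)) * (m * f)) := by
      simp only [mul_assoc]
    rw [h1, hme_i]
    have h2 : (m * f) * ((m * e) * (m * f)) = m * (f * (m * (e * (m * f)))) := by
      simp only [mul_assoc]
    rw [h2, A5']
  rw [εeq] at hmf_i hmf_I
  -- conclude by the band identity
  have final : f * (m * f) * f = f := band_sand f (m * f) hf hmf_i hIf hmf_I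
  have hshape : f * (m * f) * f = f * m * f := by
    rw [← mul_assoc f m f, mul_assoc (f * m) f f, hf]
  rw [← hshape]
  exact final
end
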